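/- arXiv:math/0204296 — 10 statements merged into one kernel-verified Lean document; each statement's English description precedes it below -/
import Mathlib

section
/- For any λ ∈ ℂ and any k with 1 ≤ k ≤ n, the diagonal matrix P_k = λ Σ_{i=1}^k e^i_i satisfies the reflection equation S A₂ S A₂ = A₂ S A₂ S, where A₂ = 1 ⊗ P_k. -/
open Matrix Kronecker

/-- The coefficient `s_{ik}`: `q - q⁻¹` if `i < k`, `q` if `i = k`, `0` if `i > k`. -/
noncomputable def sCoeff {n : ℕ} (q : ℂ) (i k : Fin n) : ℂ :=
  if (i : ℕ) < (k : ℕ) then q - q⁻¹ else if i = k then q else 0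

/-- The standard `U_q(gl(n))` braid matrix
`S = Σ_{i,k} s_{ik} e^i_i ⊗ e^k_k + Σ_{i≠j} e^i_j ⊗ e^j_i` on `ℂ^n ⊗ ℂ^n`. -/
noncomputable def braidS (n : ℕ) (q : ℂ) :
    Matrix (Fin n × Fin n) (Fin n × Fin n) ℂ :=
  fun p r =>
    (if p.1 = r.1 ∧ p.2 = r.2 then sCoeff q p.1 p.2 else 0) +
    (if p.1 ≠ p.2 ∧ r.1 = p.2 ∧ r.2 = p.1 then 1 else 0)

/-- `A₂ = 1 ⊗ A` on `ℂ^n ⊗ ℂ^n`. -/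
noncomputable def A2 {n : ℕ} (A : Matrix (Fin n) (Fin n) ℂ) :
    Matrix (Fin n × Fin n) (Fin n × Fin n) ℂ :=
  (1 : Matrix (Fin n) (Fin n) ℂ) ⊗ₖ A

/-- The reflection equation `S A₂ S A₂ = A₂ S A₂ S`. -/
noncomputable def RE (n : ℕ) (q : ℂ) (A : Matrix (Fin n) (Fin n) ℂ) : Prop :=
  braidS n q * A2 A * braidS n q * A2 A = A2 A * braidS n q * A2 A * braidS n q

/-- `P_k = λ Σ_{i=1}^k e^i_i` (1-based indices `1 ≤ i ≤ k`) is a solution of the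
reflection equation. -/
theorem Pk_solves_RE (n : ℕ) (hn : 1 ≤ n) (q : ℂ) (hq : q ≠ 0) (hq2 : q ^ 2 ≠ 1)
    (lam : ℂ) (k : ℕ) (hk1 : 1 ≤ k) (hkn : k ≤ n) :
    RE n q (fun i j : Fin n => if i = j ∧ (i : ℕ) + 1 ≤ k then lam else 0) := by
  classical
  set a : Fin n → ℂ := fun i => if (i : ℕ) + 1 ≤ k then lam else 0 with ha
  have hA : (fun i j : Fin n => if i = j ∧ (i : ℕ) + 1 ≤ k then lam else 0)
      = Matrix.diagonal a := by
    funext i j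
    by_cases hij : i = j
    · subst hij; simp [ha]
    · simp [Matrix.diagonal_apply_ne _ hij, hij]
  have hA2 : A2 (Matrix.diagonal a)
      = Matrix.diagonal (fun p : Fin n × Fin n => a p.2) := by
    rw [A2, show (1 : Matrix (Fin n) (Fin n) ℂ) = Matrix.diagonal (fun _ => 1) by simp,
      Matrix.diagonal_kronecker_diagonal]
    simp
  unfold RE
  rw [hA, hA2]
  set S := braidS n q with hS
  set D := Matrix.diagonal (fun p : Fin n × Fin n => a p.2) with hD
  have comm : (S * D * S) * D = D * (S * D * S) := by
    ext p r
    rw [Matrix.mul_diagonal, Matrix.diagonal_mul]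
    by_cases h : a p.2 = a r.2
    · rw [h]; ring
    · have hl : lam ≠ 0 := by
        rintro rfl
        simp [ha] at h
      have hpr : ((p.2 : ℕ) + 1 ≤ k ∧ ¬ ((r.2 : ℕ) + 1 ≤ k)) ∨
          (¬ ((p.2 : ℕ) + 1 ≤ k) ∧ (r.2 : ℕ) + 1 ≤ k) := by
        by_cases hp : (p.2 : ℕ) + 1 ≤ k <;> by_cases hr : (r.2 : ℕ) + 1 ≤ k <;>
          simp only [ha, hp, hr] at h ⊢ <;> simp at h ⊢
      have hM : (S * D * S) p r = 0 := by
        rw [Matrix.mul_apply]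
        apply Finset.sum_eq_zero
        intro u _
        rw [hD, Matrix.mul_diagonal]
        simp only [hS, braidS, sCoeff, ha]
        split_ifs
        all_goals try ring
        all_goals exfalso
        all_goals simp only [Fin.ext_iff, Prod.ext_iff, not_and_or, not_and,
                not_lt, not_le, ne_eq] at *
        all_goals omega
      rw [hM]; ring
  calc S * D * S * D = D * (S * D * S) := comm
    _ = D * S * D * S := by simp only [mul_assoc]
end

section
/- The antidiagonal matrix D_n = λ Σ_{i=1}^n e^i_{n+1-i} satisfies the reflection equation S A₂ S A₂ = A₂ S A₂ S for every λ ∈ ℂ. -/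
open Matrix Kronecker

section Aux
variable {n : ℕ} (q lam : ℂ)

lemma D_apply (j i : Fin n) :
    (if (j : ℕ) + (i : ℕ) + 1 = n then lam else 0) = if i = Fin.rev j then lam else 0 := by
  have h := j.isLt; have h2 := i.isLt
  congr 1
  simp only [eq_iff_iff, Fin.ext_iff, Fin.val_rev]
  omega

lemma mul_A2_apply (M : Matrix (Fin n × Fin n) (Fin n × Fin n) ℂ)
    (p s : Fin n × Fin n) :
    (M * A2 (fun j i : Fin n => if (j : ℕ) + (i : ℕ) + 1 = n then lam else 0)) p s
      = M p (s.1, Fin.rev s.2) * lam := by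
  rw [Matrix.mul_apply, Fintype.sum_prod_type]
  simp only [A2, kroneckerMap, Matrix.of_apply, Matrix.one_apply, D_apply]
  have : ∀ d : Fin n, (if s.2 = Fin.rev d then lam else 0) =
      (if d = Fin.rev s.2 then lam else 0) := by
    intro d
    have h := d.isLt; have h2 := s.2.isLt
    congr 1
    simp only [eq_iff_iff, Fin.ext_iff, Fin.val_rev]
    omega
  simp only [this]
  simp [mul_ite, ite_mul, Finset.sum_ite_eq', Finset.mem_univ, mul_comm]

lemma A2_mul_apply (M : Matrix (Fin n × Fin n) (Fin n × Fin n) ℂ)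
    (p s : Fin n × Fin n) :
    (A2 (fun j i : Fin n => if (j : ℕ) + (i : ℕ) + 1 = n then lam else 0) * M) p s
      = lam * M (p.1, Fin.rev p.2) s := by
  rw [Matrix.mul_apply, Fintype.sum_prod_type]
  simp only [A2, kroneckerMap, Matrix.of_apply, Matrix.one_apply, D_apply]
  simp [mul_ite, ite_mul, Finset.sum_ite_eq, Finset.mem_univ]

lemma sum_S (a b : Fin n) (F : Fin n → Fin n → ℂ) :
    (∑ c : Fin n, ∑ d : Fin n, braidS n q (a, b) (c, Fin.rev d) * F c d)
      = sCoeff q a b * F a (Fin.rev b) + if a = b then 0 else F b (Fin.rev a) := by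
  have h1 : ∀ c d : Fin n, ((a, b).1 = (c, Fin.rev d).1 ∧ (a, b).2 = (c, Fin.rev d).2)
      = (c = a ∧ d = Fin.rev b) := by
    intro c d
    have := b.isLt; have := d.isLt
    simp only [eq_iff_iff, Fin.ext_iff, Fin.val_rev]
    omega
  have h2 : ∀ c d : Fin n,
      ((a, b).1 ≠ (a, b).2 ∧ (c, Fin.rev d).1 = (a, b).2 ∧ (c, Fin.rev d).2 = (a, b).1)
      = (¬ a = b ∧ (c = b ∧ d = Fin.rev a)) := by
    intro c d
    have := a.isLt; have := d.isLt
    simp only [eq_iff_iff, Fin.ext_iff, Fin.val_rev, ne_eq]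
    omega
  simp only [braidS, h1, h2, add_mul, Finset.sum_add_distrib, ite_mul, zero_mul,
    one_mul, ite_and]
  congr 1
  · simp [Finset.sum_ite_eq', Finset.mem_univ]
  · by_cases hab : a = b <;>
      simp [hab, Finset.sum_ite_eq', Finset.mem_univ]

lemma sCoeff_rev_rev (a b : Fin n) : sCoeff q (Fin.rev b) (Fin.rev a) = sCoeff q a b := by
  have := a.isLt; have := b.isLt
  unfold sCoeff
  simp only [Fin.ext_iff, Fin.val_rev]
  split_ifs <;> first | rfl | omega

lemma sCoeff_swap_rev (a b : Fin n) : sCoeff q b (Fin.rev a) = sCoeff q a (Fin.rev b) := by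
  have := a.isLt; have := b.isLt
  unfold sCoeff
  simp only [Fin.ext_iff, Fin.val_rev]
  split_ifs <;> first | rfl | omega

lemma myIteZeroAdd (c : Prop) [Decidable c] (x y : ℂ) :
    (if c then (0:ℂ) else (x + y)) = (if c then 0 else x) + (if c then 0 else y) := by
  split <;> simp

lemma key (a b e f : Fin n) :
    (∑ c : Fin n, ∑ d : Fin n,
        braidS n q (a, b) (c, Fin.rev d) * braidS n q (c, d) (e, Fin.rev f))
    = ∑ c : Fin n, ∑ d : Fin n,
        braidS n q (a, Fin.rev b) (c, Fin.rev d) * braidS n q (c, d) (e, f) := by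
  rw [sum_S q a b fun c d => braidS n q (c, d) (e, Fin.rev f),
    sum_S q a (Fin.rev b) fun c d => braidS n q (c, d) (e, f), Fin.rev_rev]
  have ha := a.isLt; have hb := b.isLt; have he := e.isLt; have hf := f.isLt
  have t1 : braidS n q (a, Fin.rev b) (e, Fin.rev f)
      = (if a = e ∧ b = f then sCoeff q a (Fin.rev b) else 0)
        + (if ¬ a = Fin.rev b ∧ e = Fin.rev b ∧ f = Fin.rev a then 1 else 0) := by
    simp only [braidS, ne_eq]
    congr 1 <;>
      (congr 1; simp only [eq_iff_iff, Fin.ext_iff, Fin.val_rev]; omega)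
  have t2 : braidS n q (b, Fin.rev a) (e, Fin.rev f)
      = (if e = b ∧ f = a then sCoeff q a (Fin.rev b) else 0)
        + (if ¬ a = Fin.rev b ∧ e = Fin.rev a ∧ f = Fin.rev b then 1 else 0) := by
    simp only [braidS, ne_eq]
    rw [sCoeff_swap_rev q a b]
    congr 1 <;>
      (congr 1; simp only [eq_iff_iff, Fin.ext_iff, Fin.val_rev]; omega)
  have t3 : braidS n q (a, b) (e, f)
      = (if a = e ∧ b = f then sCoeff q a b else 0)
        + (if ¬ a = b ∧ e = b ∧ f = a then 1 else 0) := by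
    simp only [braidS, ne_eq]
  have t4 : braidS n q (Fin.rev b, Fin.rev a) (e, f)
      = (if e = Fin.rev b ∧ f = Fin.rev a then sCoeff q a b else 0)
        + (if ¬ a = b ∧ e = Fin.rev a ∧ f = Fin.rev b then 1 else 0) := by
    simp only [braidS, ne_eq]
    rw [sCoeff_rev_rev q a b]
    congr 1 <;>
      (congr 1; simp only [eq_iff_iff, Fin.ext_iff, Fin.val_rev]; omega)
  rw [t1, t2, t3, t4, myIteZeroAdd, myIteZeroAdd]
  have P1 : sCoeff q a b * (if a = e ∧ b = f then sCoeff q a (Fin.rev b) else 0)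
      = sCoeff q a (Fin.rev b) * (if a = e ∧ b = f then sCoeff q a b else 0) := by
    split_ifs <;> ring
  have P2 : sCoeff q a b *
        (if ¬ a = Fin.rev b ∧ e = Fin.rev b ∧ f = Fin.rev a then (1:ℂ) else 0)
      = (if a = Fin.rev b then 0
          else (if e = Fin.rev b ∧ f = Fin.rev a then sCoeff q a b else 0)) := by
    by_cases h : a = Fin.rev b
    · rw [if_pos h, if_neg (fun hc => hc.1 h), mul_zero]
    · rw [if_neg h]
      by_cases h2 : e = Fin.rev b ∧ f = Fin.rev a
      · rw [if_pos ⟨h, h2.1, h2.2⟩, if_pos h2, mul_one]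
      · rw [if_neg (fun hc => h2 ⟨hc.2.1, hc.2.2⟩), if_neg h2, mul_zero]
  have P3 : (if a = b then (0:ℂ)
          else (if e = b ∧ f = a then sCoeff q a (Fin.rev b) else 0))
      = sCoeff q a (Fin.rev b) * (if ¬ a = b ∧ e = b ∧ f = a then 1 else 0) := by
    by_cases h : a = b
    · rw [if_pos h, if_neg (fun hc => hc.1 h), mul_zero]
    · rw [if_neg h]
      by_cases h2 : e = b ∧ f = a
      · rw [if_pos h2, if_pos ⟨h, h2.1, h2.2⟩, mul_one]
      · rw [if_neg h2, if_neg (fun hc => h2 ⟨hc.2.1, hc.2.2⟩), mul_zero]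
  have P4 : (if a = b then (0:ℂ)
          else (if ¬ a = Fin.rev b ∧ e = Fin.rev a ∧ f = Fin.rev b then 1 else 0))
      = (if a = Fin.rev b then 0
          else (if ¬ a = b ∧ e = Fin.rev a ∧ f = Fin.rev b then 1 else 0)) := by
    by_cases h : a = b <;> by_cases h' : a = Fin.rev b
    · rw [if_pos h, if_pos h']
    · rw [if_pos h, if_neg h', if_neg (fun hc => hc.1 h)]
    · rw [if_neg h, if_pos h', if_neg (fun hc => hc.1 h')]
    · rw [if_neg h, if_neg h']
      by_cases h2 : e = Fin.rev a ∧ f = Fin.rev b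
      · rw [if_pos ⟨h', h2.1, h2.2⟩, if_pos ⟨h, h2.1, h2.2⟩]
      · rw [if_neg (fun hc => h2 ⟨hc.2.1, hc.2.2⟩), if_neg (fun hc => h2 ⟨hc.2.1, hc.2.2⟩)]
  linear_combination P1 + P2 + P3 + P4
end Aux

/-- The antidiagonal matrix `D_n = λ Σ_{i=1}^n e^i_{n+1-i}` is a solution of the
reflection equation. -/
theorem Dn_solves_RE (n : ℕ) (hn : 1 ≤ n) (q : ℂ) (hq : q ≠ 0) (hq2 : q ^ 2 ≠ 1)
    (lam : ℂ) :
    RE n q (fun j i : Fin n => if (j : ℕ) + (i : ℕ) + 1 = n then lam else 0) := by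
  unfold RE
  have hR : ∀ X : Matrix (Fin n × Fin n) (Fin n × Fin n) ℂ,
      X * braidS n q * X * braidS n q = X * (braidS n q * X * braidS n q) := by
    intro X
    simp only [Matrix.mul_assoc]
  rw [hR _]
  ext ⟨a, b⟩ ⟨e, f⟩
  rw [mul_A2_apply, A2_mul_apply, Matrix.mul_apply, Matrix.mul_apply]
  simp only [mul_A2_apply]
  simp only [Fintype.sum_prod_type]
  have hL : (∑ c : Fin n, ∑ d : Fin n,
        braidS n q (a, b) (c, Fin.rev d) * lam * braidS n q (c, d) (e, Fin.rev f)) * lam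
      = lam * lam * ∑ c : Fin n, ∑ d : Fin n,
          braidS n q (a, b) (c, Fin.rev d) * braidS n q (c, d) (e, Fin.rev f) := by
    simp only [Finset.sum_mul, Finset.mul_sum]
    exact Finset.sum_congr rfl fun c _ => Finset.sum_congr rfl fun d _ => by ring
  have hR2 : lam * (∑ c : Fin n, ∑ d : Fin n,
        braidS n q (a, Fin.rev b) (c, Fin.rev d) * lam * braidS n q (c, d) (e, f))
      = lam * lam * ∑ c : Fin n, ∑ d : Fin n,
          braidS n q (a, Fin.rev b) (c, Fin.rev d) * braidS n q (c, d) (e, f) := by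
    simp only [Finset.sum_mul, Finset.mul_sum]
    exact Finset.sum_congr rfl fun c _ => Finset.sum_congr rfl fun d _ => by ring
  rw [hL, hR2, key q a b e f]
end

section
/- For n = 2, the matrix A = (λ+μ) e^1_1 + y₁ e^2_1 + y₂ e^1_2 with y₁ y₂ = -λμ ≠ 0 satisfies the reflection equation S A₂ S A₂ = A₂ S A₂ S. -/
set_option maxHeartbeats 2000000



open Matrix Kronecker

/-- For `n = 2`, the matrix `A = (λ+μ) e^1_1 + y₁ e^2_1 + y₂ e^1_2` (so that
`A^1_1 = λ+μ`, `A^1_2 = y₁`, `A^2_1 = y₂`, `A^2_2 = 0`) with `y₁ y₂ = -λμ ≠ 0`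
satisfies the reflection equation. -/
theorem A11_solves_RE (q : ℂ) (hq : q ≠ 0) (hq2 : q ^ 2 ≠ 1)
    (lam mu y₁ y₂ : ℂ) (hy : y₁ * y₂ = -(lam * mu)) (hne : lam * mu ≠ 0) :
    RE 2 q !![lam + mu, y₁; y₂, 0] := by
  unfold RE
  ext ⟨i,j⟩ ⟨k,l⟩
  simp only [Matrix.mul_apply, Fintype.sum_prod_type, Fin.sum_univ_two,
    Matrix.kroneckerMap_apply, Matrix.one_apply]
  simp only [braidS, A2, sCoeff, Matrix.kroneckerMap_apply, Matrix.one_apply]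
  fin_cases i <;> fin_cases j <;> fin_cases k <;> fin_cases l <;>
    norm_num [Matrix.cons_val_zero, Matrix.cons_val_one, Matrix.head_cons]
  all_goals try (field_simp; ring_nf)

  all_goals ring
end

section
/- If A ∈ End(ℂ^n) satisfies the reflection equation with the standard Uq(gl(n)) braid matrix S (q generic, i.e. q² ∉ {0,1}), then for all distinct indices i, m, n' with m ≠ n', one has A^m_i A^{n'}_i = 0 and A^i_m A^i_{n'} = 0; that is, A has at most one nonzero off-diagonal entry in every row and every column. -/
open Matrix Kronecker

/-!
Write `B = A₂ S A₂`; the reflection equation says that `S` commutes with `B`. The row and the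
column of `S` indexed by `(i, i)` are `q` times a unit vector, and for `a < b` the row and the
column indexed by `(b, a)` are the unit vector at `(a, b)`, because `s_{ba} = 0`. Moreover
`B_{(x,y),(c,d)} = A^y_c A^x_d` whenever `x ≠ c`. Comparing `S B` and `B S` at
`((b, a), (i, i))` and at `((i, i), (b, a))` thus gives `A^b_i A^a_i = q A^a_i A^b_i` and
`q A^i_b A^i_a = A^i_a A^i_b`, so both products vanish as `q ≠ 1`.
-/

section

variable {n : ℕ} {q : ℂ} {ι : Type*}

lemma sCoeff_self (i : Fin n) : sCoeff q i i = q := by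
  simp [sCoeff]

lemma sCoeff_eq_zero_of_lt {a b : Fin n} (hab : a < b) : sCoeff q b a = 0 := by
  simp [sCoeff, Fin.lt_asymm hab, hab.ne']

lemma braidS_apply_self_left (i : Fin n) (u : Fin n × Fin n) :
    braidS n q (i, i) u = if u = (i, i) then q else 0 := by
  obtain ⟨u₁, u₂⟩ := u
  by_cases h₁ : u₁ = i <;> by_cases h₂ : u₂ = i <;> simp_all [braidS, sCoeff_self, eq_comm]

lemma braidS_apply_self_right (i : Fin n) (u : Fin n × Fin n) :
    braidS n q u (i, i) = if u = (i, i) then q else 0 := by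
  obtain ⟨u₁, u₂⟩ := u
  by_cases h₁ : u₁ = i <;> by_cases h₂ : u₂ = i <;> simp_all [braidS, sCoeff_self, eq_comm]

lemma braidS_apply_of_lt_left {a b : Fin n} (hab : a < b) (u : Fin n × Fin n) :
    braidS n q (b, a) u = if u = (a, b) then 1 else 0 := by
  obtain ⟨u₁, u₂⟩ := u
  simp [braidS, sCoeff_eq_zero_of_lt hab, hab.ne', and_comm]

lemma braidS_apply_of_lt_right {a b : Fin n} (hab : a < b) (u : Fin n × Fin n) :
    braidS n q u (b, a) = if u = (a, b) then 1 else 0 := by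
  obtain ⟨u₁, u₂⟩ := u
  by_cases h : u₁ = a ∧ u₂ = b
  · obtain ⟨rfl, rfl⟩ := h
    simp [braidS, hab.ne]
  · by_cases h' : u₁ = b ∧ u₂ = a
    · obtain ⟨rfl, rfl⟩ := h'
      simp [braidS, sCoeff_eq_zero_of_lt hab, hab.ne']
    · simp only [braidS, Prod.mk.injEq, if_neg h', if_neg h, zero_add]
      exact if_neg (by tauto)

lemma braidS_apply_of_fst_ne {x c : Fin n} (hxc : x ≠ c) (t t' : Fin n) :
    braidS n q (x, t) (c, t') = if t = c ∧ t' = x then 1 else 0 := by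
  by_cases h : t = c ∧ t' = x
  · obtain ⟨rfl, rfl⟩ := h
    simp [braidS, hxc]
  · simp only [braidS, hxc, false_and, if_false, h, zero_add]
    exact if_neg (by tauto)

lemma braidS_mul_apply_self (M : Matrix (Fin n × Fin n) ι ℂ) (i : Fin n) (v : ι) :
    (braidS n q * M) (i, i) v = q * M (i, i) v := by
  simp [Matrix.mul_apply, braidS_apply_self_left]

lemma mul_braidS_apply_self (M : Matrix ι (Fin n × Fin n) ℂ) (u : ι) (i : Fin n) :
    (M * braidS n q) u (i, i) = M u (i, i) * q := by
  simp [Matrix.mul_apply, braidS_apply_self_right]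

lemma braidS_mul_apply_of_lt (M : Matrix (Fin n × Fin n) ι ℂ) {a b : Fin n} (hab : a < b)
    (v : ι) : (braidS n q * M) (b, a) v = M (a, b) v := by
  simp [Matrix.mul_apply, braidS_apply_of_lt_left hab]

lemma mul_braidS_apply_of_lt (M : Matrix ι (Fin n × Fin n) ℂ) (u : ι) {a b : Fin n}
    (hab : a < b) : (M * braidS n q) u (b, a) = M u (a, b) := by
  simp [Matrix.mul_apply, braidS_apply_of_lt_right hab]

lemma A2_mul_braidS_mul_A2_apply (A : Matrix (Fin n) (Fin n) ℂ) {x c : Fin n} (hxc : x ≠ c)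
    (y d : Fin n) : (A2 A * braidS n q * A2 A) (x, y) (c, d) = A y c * A x d := by
  simp [Matrix.mul_apply, Fintype.sum_prod_type, A2, Matrix.one_apply,
    braidS_apply_of_fst_ne hxc, ite_and]

lemma RE_iff_commute {A : Matrix (Fin n) (Fin n) ℂ} :
    RE n q A ↔ Commute (braidS n q) (A2 A * braidS n q * A2 A) := by
  simp only [RE, Commute, SemiconjBy, Matrix.mul_assoc]

lemma RE.col_mul_eq_zero_of_lt {A : Matrix (Fin n) (Fin n) ℂ} (hA : RE n q A) (hq : q ≠ 1)
    {i a b : Fin n} (hab : a < b) (hai : a ≠ i) (hbi : b ≠ i) : A a i * A b i = 0 := by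
  have h := congrFun (congrFun (RE_iff_commute.mp hA).eq (b, a)) (i, i)
  rw [braidS_mul_apply_of_lt _ hab, mul_braidS_apply_self, A2_mul_braidS_mul_A2_apply _ hai,
    A2_mul_braidS_mul_A2_apply _ hbi] at h
  have h' : A a i * A b i * (1 - q) = 0 := by linear_combination h
  exact (mul_eq_zero.mp h').resolve_right (sub_ne_zero.mpr hq.symm)

lemma RE.row_mul_eq_zero_of_lt {A : Matrix (Fin n) (Fin n) ℂ} (hA : RE n q A) (hq : q ≠ 1)
    {i a b : Fin n} (hab : a < b) (hai : a ≠ i) (hbi : b ≠ i) : A i a * A i b = 0 := by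
  have h := congrFun (congrFun (RE_iff_commute.mp hA).eq (i, i)) (b, a)
  rw [braidS_mul_apply_self, mul_braidS_apply_of_lt _ _ hab, A2_mul_braidS_mul_A2_apply _ hbi.symm,
    A2_mul_braidS_mul_A2_apply _ hai.symm] at h
  have h' : A i a * A i b * (1 - q) = 0 := by linear_combination -h
  exact (mul_eq_zero.mp h').resolve_right (sub_ne_zero.mpr hq.symm)

end

theorem RE_row_column_general (n : ℕ) (q : ℂ) (hq2 : q ^ 2 ≠ 1)
    (A : Matrix (Fin n) (Fin n) ℂ) (hA : RE n q A)
    (i m k : Fin n) (hmk : m ≠ k) (hmi : m ≠ i) (hki : k ≠ i) :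
    A m i * A k i = 0 ∧ A i m * A i k = 0 := by
  have hq : q ≠ 1 := fun h => hq2 (by rw [h, one_pow])
  rcases hmk.lt_or_gt with hlt | hgt
  · exact ⟨hA.col_mul_eq_zero_of_lt hq hlt hmi hki, hA.row_mul_eq_zero_of_lt hq hlt hmi hki⟩
  · rw [mul_comm (A m i), mul_comm (A i m)]
    exact ⟨hA.col_mul_eq_zero_of_lt hq hgt hki hmi, hA.row_mul_eq_zero_of_lt hq hgt hki hmi⟩

/-- A solution of the reflection equation has at most one nonzero off-diagonal
entry in each row and each column: for distinct `i, m, k`,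
`A^m_i A^k_i = 0` and `A^i_m A^i_k = 0`. -/
theorem RE_row_column (n : ℕ) (hn : 1 ≤ n) (q : ℂ) (hq : q ≠ 0) (hq2 : q ^ 2 ≠ 1)
    (A : Matrix (Fin n) (Fin n) ℂ) (hA : RE n q A)
    (i m k : Fin n) (hmk : m ≠ k) (hmi : m ≠ i) (hki : k ≠ i) :
    A m i * A k i = 0 ∧ A i m * A i k = 0 :=
  RE_row_column_general n q hq2 A hA i m k hmk hmi hki
end

section
/- If A ∈ End(ℂ^n) satisfies the reflection equation with the standard Uq(gl(n)) braid matrix (q generic), then for all indices i, j, m, k with j ≠ m, m ≠ k, k ≠ i, and (m - i)(k - j) < 0, one has A^k_i A^j_m = 0. In particular, the positions of the nonzero off-diagonal entries of A form the graph of a strictly decreasing partial map. -/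
open Matrix Kronecker

/-!
Compare the `((k, j), (m, i))` entries of the two sides of the reflection equation, written as
`(S A₂)² = (A₂ S)²`. Once also `k ≠ j` and `m ≠ i` (forced by `(m - i)(k - j) < 0`), each side
has just two nonzero terms: the flip part of `S` contributes `A^k_m A^j_i` to both, while its
diagonal part contributes `s_{kj} A^k_i A^j_m` on the left and `s_{mi} A^k_i A^j_m` on the right.
Hence `(s_{kj} - s_{mi}) A^k_i A^j_m = 0`, and the sign condition makes one of `s_{kj}, s_{mi}`
equal to `q - q⁻¹ ≠ 0` and the other `0`.
-/

lemma sub_inv_ne_zero_of_sq_ne_one {K : Type*} [Field K] {q : K} (hq : q ≠ 0)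
    (hq2 : q ^ 2 ≠ 1) : q - q⁻¹ ≠ 0 := by
  rw [sub_ne_zero]
  intro h
  apply hq2
  rw [sq]
  nth_rw 2 [h]
  exact mul_inv_cancel₀ hq

section

variable {n : ℕ} (q : ℂ)

lemma sCoeff_of_lt {i k : Fin n} (h : (i : ℕ) < k) : sCoeff q i k = q - q⁻¹ :=
  if_pos h

lemma sCoeff_of_gt {i k : Fin n} (h : (k : ℕ) < i) : sCoeff q i k = 0 := by
  rw [sCoeff, if_neg (by omega), if_neg (Fin.ne_of_gt h)]

variable (A : Matrix (Fin n) (Fin n) ℂ)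

lemma braidS_mul_A2_apply (a b e f : Fin n) :
    (braidS n q * A2 A) (a, b) (e, f) =
      (if a = e then sCoeff q a b * A b f else 0) + (if a ≠ b ∧ e = b then A a f else 0) := by
  simp [mul_apply, Fintype.sum_prod_type, braidS, A2, one_apply, add_mul, ite_and,
    Finset.sum_add_distrib]

lemma A2_mul_braidS_apply (a b e f : Fin n) :
    (A2 A * braidS n q) (a, b) (e, f) =
      (if a = e then A b f * sCoeff q a f else 0) + (if a ≠ e ∧ f = a then A b e else 0) := by
  rw [mul_apply, Fintype.sum_prod_type,
    Finset.sum_eq_single a (fun x _ hx => by simp [A2, one_apply_ne hx.symm]) (by simp)]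
  simp only [A2, braidS, kroneckerMap_apply, one_apply_eq, one_mul, mul_add, mul_ite, mul_zero,
    mul_one, Finset.sum_add_distrib]
  rw [Finset.sum_eq_single f (by grind) (by simp), Finset.sum_eq_single e (by grind) (by simp)]
  grind

variable {q A} {i j m k : Fin n}

lemma braidS_mul_A2_mul_self_apply (hjm : j ≠ m) (hmk : m ≠ k) (hkj : k ≠ j) :
    (braidS n q * A2 A * (braidS n q * A2 A)) (k, j) (m, i) =
      sCoeff q k j * (A k i * A j m) + A k m * A j i := by
  rw [mul_apply, Fintype.sum_eq_add (k, m) (j, m) (by simp [hkj])]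
  · simp only [braidS_mul_A2_apply, ↓reduceIte, ne_eq, hkj, not_false_eq_true, and_false,
      add_zero, hmk.symm, and_self, zero_add, hjm, add_left_inj]
    ring
  · rintro ⟨x, y⟩ h
    simp only [braidS_mul_A2_apply]
    grind

lemma A2_mul_braidS_mul_self_apply (hmk : m ≠ k) (hki : k ≠ i) (hmi : m ≠ i) :
    (A2 A * braidS n q * (A2 A * braidS n q)) (k, j) (m, i) =
      sCoeff q m i * (A k i * A j m) + A k m * A j i := by
  rw [mul_apply, Fintype.sum_eq_add (m, k) (i, k) (by simp [hmi])]
  · simp only [A2_mul_braidS_apply, hmk.symm, ↓reduceIte, ne_eq, not_false_eq_true, and_self,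
      zero_add, not_true_eq_false, hmi.symm, add_zero, hki]
    ring
  · rintro ⟨x, y⟩ h
    simp only [A2_mul_braidS_apply]
    grind

lemma RE.sCoeff_sub_mul_eq_zero (hA : RE n q A) (hjm : j ≠ m) (hmk : m ≠ k) (hki : k ≠ i)
    (hkj : k ≠ j) (hmi : m ≠ i) :
    (sCoeff q k j - sCoeff q m i) * (A k i * A j m) = 0 := by
  have hsq :
      braidS n q * A2 A * (braidS n q * A2 A) = A2 A * braidS n q * (A2 A * braidS n q) := by
    rw [← mul_assoc, ← mul_assoc]
    exact hA
  have h := congrFun (congrFun hsq (k, j)) (m, i)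
  rw [braidS_mul_A2_mul_self_apply hjm hmk hkj, A2_mul_braidS_mul_self_apply hmk hki hmi] at h
  linear_combination h

end

theorem RE_decreasing_general (n : ℕ) (q : ℂ) (hq : q ≠ 0) (hq2 : q ^ 2 ≠ 1)
    (A : Matrix (Fin n) (Fin n) ℂ) (hA : RE n q A)
    (i j m k : Fin n) (hjm : j ≠ m) (hmk : m ≠ k) (hki : k ≠ i)
    (hlt : (((m : ℕ) : ℤ) - ((i : ℕ) : ℤ)) * (((k : ℕ) : ℤ) - ((j : ℕ) : ℤ)) < 0) :
    A k i * A j m = 0 := by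
  have hqq := sub_inv_ne_zero_of_sq_ne_one hq hq2
  rcases mul_neg_iff.mp hlt with ⟨him, hjk⟩ | ⟨hmi, hkj⟩
  · have h := hA.sCoeff_sub_mul_eq_zero hjm hmk hki (Fin.ne_of_lt (by omega))
      (Fin.ne_of_gt (by omega))
    rw [sCoeff_of_lt q (by omega), sCoeff_of_gt q (by omega), sub_zero] at h
    exact (mul_eq_zero.mp h).resolve_left hqq
  · have h := hA.sCoeff_sub_mul_eq_zero hjm hmk hki (Fin.ne_of_gt (by omega))
      (Fin.ne_of_lt (by omega))
    rw [sCoeff_of_gt q (by omega), sCoeff_of_lt q (by omega), zero_sub] at h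
    exact (mul_eq_zero.mp h).resolve_left (neg_ne_zero.mpr hqq)

/-- For a solution of the reflection equation, `A^k_i A^j_m = 0` whenever
`j ≠ m`, `m ≠ k`, `k ≠ i` and `(m - i)(k - j) < 0`; hence the nonzero
off-diagonal entries form the graph of a strictly decreasing partial map. -/
theorem RE_decreasing (n : ℕ) (hn : 1 ≤ n) (q : ℂ) (hq : q ≠ 0) (hq2 : q ^ 2 ≠ 1)
    (A : Matrix (Fin n) (Fin n) ℂ) (hA : RE n q A)
    (i j m k : Fin n) (hjm : j ≠ m) (hmk : m ≠ k) (hki : k ≠ i)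
    (hlt : (((m : ℕ) : ℤ) - ((i : ℕ) : ℤ)) * (((k : ℕ) : ℤ) - ((j : ℕ) : ℤ)) < 0) :
    A k i * A j m = 0 :=
  RE_decreasing_general n q hq hq2 A hA i j m k hjm hmk hki hlt
end

section
/- A 2×2 matrix A over ℂ with entries A^1_1 = x₁, A^2_2 = x₂, A^1_2 = y, A^2_1 = z satisfies the reflection equation for the standard Uq(gl(2)) braid matrix (q generic) if and only if A is one of: (i) x₁ = λ+μ, x₂ = 0, yz = -λμ ≠ 0 for some λ, μ ∈ ℂ; (ii) a diagonal matrix diag(λ, λ), diag(λ, 0), or diag(0,0) for some λ ∈ ℂ; (iii) x₁ = λ, x₂ = 0, exactly one of y, z nonzero, for some λ ∈ ℂ. -/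
open Matrix Kronecker

set_option maxHeartbeats 1600000 in
/-- Any matrix with lower-right entry `0` solves the 2×2 reflection equation. -/
lemma RE_of_x2_zero (q x₁ y z : ℂ) (hq : q ≠ 0) : RE 2 q !![x₁, y; z, 0] := by
  rw [RE, ← Matrix.ext_iff]
  simp only [Prod.forall, Fin.forall_fin_two]
  and_intros <;>
  · simp only [Matrix.mul_apply, Fintype.sum_prod_type, Fin.sum_univ_two, braidS, A2, sCoeff,
      Matrix.kroneckerMap_apply, Matrix.one_apply, Matrix.cons_val', Matrix.cons_val_zero,
      Matrix.cons_val_one, Matrix.head_cons, Matrix.head_fin_const, Matrix.empty_val']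
    norm_num
    try field_simp
    try ring

/-- Any scalar matrix solves the reflection equation. -/
lemma RE_of_scalar (n : ℕ) (q lam : ℂ) :
    RE n q (lam • (1 : Matrix (Fin n) (Fin n) ℂ)) := by
  unfold RE A2
  rw [Matrix.kronecker_smul, Matrix.one_kronecker_one]
  simp only [Matrix.mul_smul, Matrix.smul_mul, Matrix.mul_one, Matrix.one_mul, smul_smul]

lemma scalar_eq (lam : ℂ) :
    !![lam, 0; 0, lam] = lam • (1 : Matrix (Fin 2) (Fin 2) ℂ) := by
  ext i j
  fin_cases i <;> fin_cases j <;> simp [Matrix.one_apply]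

set_option maxHeartbeats 2000000 in
/-- Classification of 2×2 solutions of the reflection equation:
`A = !![x₁, y; z, x₂]` is a solution iff it is (i) of Type 1 with
`x₁ = λ+μ, x₂ = 0, yz = -λμ ≠ 0`; or (ii) diagonal `diag(λ,λ)`, `diag(λ,0)`
or `diag(0,0)`; or (iii) of Type 2 with `x₁ = λ, x₂ = 0` and exactly one of
`y, z` nonzero. -/
theorem RE_classification_2 (q : ℂ) (hq : q ≠ 0) (hq2 : q ^ 2 ≠ 1)
    (x₁ x₂ y z : ℂ) :
    RE 2 q !![x₁, y; z, x₂] ↔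
      ((∃ lam mu : ℂ, x₁ = lam + mu ∧ x₂ = 0 ∧ y * z = -(lam * mu) ∧ lam * mu ≠ 0) ∨
       (y = 0 ∧ z = 0 ∧ ∃ lam : ℂ,
          (x₁ = lam ∧ x₂ = lam) ∨ (x₁ = lam ∧ x₂ = 0) ∨ (x₁ = 0 ∧ x₂ = 0)) ∨
       (∃ lam : ℂ, x₁ = lam ∧ x₂ = 0 ∧ ((y ≠ 0 ∧ z = 0) ∨ (y = 0 ∧ z ≠ 0)))) := by
  have hq2' : q ^ 2 - 1 ≠ 0 := sub_ne_zero.2 hq2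
  constructor
  · intro h
    rw [RE] at h
    have h01 := congrFun (congrFun h (0, 0)) (0, 1)
    have h10 := congrFun (congrFun h (0, 1)) (0, 0)
    have h12 := congrFun (congrFun h (0, 1)) (1, 0)
    simp only [Matrix.mul_apply, Fintype.sum_prod_type, Fin.sum_univ_two, braidS, A2, sCoeff,
      Matrix.kroneckerMap_apply, Matrix.one_apply, Matrix.cons_val', Matrix.cons_val_zero,
      Matrix.cons_val_one, Matrix.head_cons, Matrix.head_fin_const,
      Matrix.empty_val'] at h01 h10 h12
    norm_num at h01 h10 h12
    field_simp at h01 h10 h12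
    -- extract the three scalar equations
    have e1 : x₂ * y = 0 := by
      have key : x₂ * y * ((q ^ 2 - 1) * q) = 0 := by linear_combination q * h01
      rcases mul_eq_zero.mp key with h' | h'
      · exact h'
      · exact absurd h' (mul_ne_zero hq2' hq)
    have e2 : x₂ * z = 0 := by
      have key : x₂ * z * (q ^ 2 - 1) = 0 := by linear_combination -h10
      rcases mul_eq_zero.mp key with h' | h'
      · exact h'
      · exact absurd h' hq2'
    have e3 : x₂ * (x₁ - x₂) = 0 := by
      have key : x₂ * (x₁ - x₂) * (q ^ 2 - 1) = 0 := by linear_combination h12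
      rcases mul_eq_zero.mp key with h' | h'
      · exact h'
      · exact absurd h' hq2'
    by_cases hx2 : x₂ = 0
    · by_cases hy : y = 0
      · by_cases hz : z = 0
        · exact Or.inr (Or.inl ⟨hy, hz, x₁, Or.inr (Or.inl ⟨rfl, hx2⟩)⟩)
        · exact Or.inr (Or.inr ⟨x₁, rfl, hx2, Or.inr ⟨hy, hz⟩⟩)
      · by_cases hz : z = 0
        · exact Or.inr (Or.inr ⟨x₁, rfl, hx2, Or.inl ⟨hy, hz⟩⟩)
        · -- both y, z nonzero : Type (i)
          obtain ⟨s, hs⟩ : ∃ s : ℂ, s ^ 2 = x₁ ^ 2 + 4 * (y * z) :=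
            IsAlgClosed.exists_pow_nat_eq _ (by norm_num : (0:ℕ) < 2)
          have hprod : (x₁ + s) / 2 * ((x₁ - s) / 2) = -(y * z) := by
            linear_combination (-1 / 4 : ℂ) * hs
          refine Or.inl ⟨(x₁ + s) / 2, (x₁ - s) / 2, by ring, hx2, ?_, ?_⟩
          · rw [hprod]; ring
          · rw [hprod]
            exact neg_ne_zero.2 (mul_ne_zero hy hz)
    · have hy : y = 0 := by
        rcases mul_eq_zero.mp e1 with h' | h'
        · exact absurd h' hx2
        · exact h'
      have hz : z = 0 := by
        rcases mul_eq_zero.mp e2 with h' | h'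
        · exact absurd h' hx2
        · exact h'
      have hx : x₁ = x₂ := by
        rcases mul_eq_zero.mp e3 with h' | h'
        · exact absurd h' hx2
        · exact sub_eq_zero.mp h'
      exact Or.inr (Or.inl ⟨hy, hz, x₂, Or.inl ⟨hx, rfl⟩⟩)
  · rintro (⟨lam, mu, hx1, hx2, _, _⟩ | ⟨hy, hz, lam, hcase⟩ | ⟨lam, hx1, hx2, _⟩)
    · subst hx2; exact RE_of_x2_zero q x₁ y z hq
    · subst hy; subst hz
      rcases hcase with ⟨h1, h2⟩ | ⟨h1, h2⟩ | ⟨h1, h2⟩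
      · subst h1; subst h2
        rw [scalar_eq]; exact RE_of_scalar 2 q _
      · subst h2; exact RE_of_x2_zero q x₁ 0 0 hq
      · subst h1; subst h2; exact RE_of_x2_zero q 0 0 0 hq
    · subst hx2; exact RE_of_x2_zero q x₁ y z hq
end

section
/- Let Y ⊂ [1,n] and σ : Y → [1,n] be a strictly decreasing injection (i.e., i < j in Y implies σ(i) > σ(j)) with no fixed points and with σ(Y) ∩ Y = ∅. Set Y₋ = {i ∈ Y : i < σ(i)}, Y₊ = {i ∈ Y : i > σ(i)}, b₋ = max(Y₋ ∪ σ(Y₊)) (0 if Y = ∅), b₊ = min(Y₊ ∪ σ(Y₋)) (n+1 if Y = ∅). Then for any b with b₋ ≤ b < b₊, any λ ∈ ℂ, and any y : Y → ℂ with y_i ≠ 0 for all i ∈ Y, the matrix A = λ Σ_{i=1}^{b} e^i_i + Σ_{i∈Y} y_i e^{σ(i)}_i satisfies the reflection equation with the standard Uq(gl(n)) braid matrix. -/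
open Matrix Kronecker

lemma sum_guard {n : ℕ} (f : Fin n → ℂ) (a r : Fin n) :
    (∑ x, if x = r then 0 else if a = x then f x else 0) = if a = r then 0 else f a := by
  classical
  have h : ∀ x : Fin n, (if x = r then 0 else if a = x then f x else 0)
      = if a = x then (if x = r then (0:ℂ) else f x) else 0 := by
    intro x; split_ifs <;> simp_all
  simp [h, Finset.sum_ite_eq, Finset.sum_ite_eq']

section Infra

variable {n : ℕ} (q : ℂ) (A : Matrix (Fin n) (Fin n) ℂ)

lemma A2_apply (p r : Fin n × Fin n) :
    A2 A p r = if p.1 = r.1 then A p.2 r.2 else 0 := by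
  simp [A2, Matrix.one_apply, ite_mul]

lemma SA2_apply (p t : Fin n × Fin n) :
    (braidS n q * A2 A) p t =
      sCoeff q p.1 p.2 * (if p.1 = t.1 then A p.2 t.2 else 0) +
      (if p.1 = p.2 then 0 else if p.2 = t.1 then A p.1 t.2 else 0) := by
  classical
  rw [Matrix.mul_apply, Fintype.sum_prod_type]
  simp only [braidS, A2_apply, add_mul, ite_mul, one_mul, zero_mul, ite_and,
    Finset.sum_add_distrib, Finset.sum_ite_eq, Finset.sum_ite_eq', Finset.mem_univ, if_true,
    Finset.sum_ite_irrel, Finset.sum_const_zero]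
  split_ifs <;> simp_all

lemma mulS_apply (M : Matrix (Fin n × Fin n) (Fin n × Fin n) ℂ) (p r : Fin n × Fin n) :
    (M * braidS n q) p r =
      M p r * sCoeff q r.1 r.2 + (if r.2 = r.1 then 0 else M p (r.2, r.1)) := by
  classical
  rw [Matrix.mul_apply, Fintype.sum_prod_type]
  have hsummand : ∀ t1 t2 : Fin n,
      M p (t1, t2) * braidS n q (t1, t2) r =
      M p (t1, t2) * (if t1 = r.1 then if t2 = r.2 then sCoeff q t1 t2 else 0 else 0) +
      (if r.1 = t2 then if r.2 = t1 then (if t1 = t2 then 0 else M p (t1, t2)) else 0 else 0) := by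
    intro t1 t2
    simp only [braidS, mul_add, ite_and, ne_eq]
    split_ifs <;> first | ring1 | (subst_vars; simp_all) | simp_all
  simp only [hsummand, Finset.sum_add_distrib, mul_ite, mul_zero,
    Finset.sum_ite_irrel, Finset.sum_const_zero,
    Finset.sum_ite_eq, Finset.sum_ite_eq', Finset.mem_univ, if_true]

lemma mulA2_apply (C : Matrix (Fin n × Fin n) (Fin n × Fin n) ℂ) (p r : Fin n × Fin n) :
    (C * A2 A) p r = ∑ u : Fin n, C p (r.1, u) * A u r.2 := by
  classical
  rw [Matrix.mul_apply, Fintype.sum_prod_type]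
  simp only [A2_apply, mul_ite, mul_zero, Finset.sum_ite_irrel, Finset.sum_const_zero,
    Finset.sum_ite_eq, Finset.sum_ite_eq', Finset.mem_univ, if_true]

lemma A2mul_apply (C : Matrix (Fin n × Fin n) (Fin n × Fin n) ℂ) (p r : Fin n × Fin n) :
    (A2 A * C) p r = ∑ u : Fin n, A p.2 u * C (p.1, u) r := by
  classical
  rw [Matrix.mul_apply, Fintype.sum_prod_type]
  simp only [A2_apply, ite_mul, zero_mul, Finset.sum_ite_irrel, Finset.sum_const_zero,
    Finset.sum_ite_eq, Finset.sum_ite_eq', Finset.mem_univ, if_true]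

lemma BA2_apply (p1 p2 r1 r2 : Fin n) :
    (braidS n q * A2 A * braidS n q * A2 A) (p1, p2) (r1, r2) =
      (if p1 = r1 then sCoeff q p1 p2 * ∑ u, sCoeff q r1 u * A p2 u * A u r2
       else sCoeff q p1 p2 * (A p2 r1 * A p1 r2)) +
      (if p1 = p2 then 0 else
        if p2 = r1 then ∑ u, sCoeff q r1 u * A p1 u * A u r2
        else A p1 r1 * A p2 r2) := by
  classical
  rw [mulA2_apply]
  have expand : ∀ u : Fin n,
      (braidS n q * A2 A * braidS n q) (p1, p2) (r1, u) * A u r2 =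
      (if p1 = r1 then sCoeff q p1 p2 * (sCoeff q r1 u * A p2 u * A u r2) else 0) +
      (if p1 = p2 then 0 else if p2 = r1 then sCoeff q r1 u * A p1 u * A u r2 else 0) +
      ((if u = r1 then 0 else if p1 = u then sCoeff q p1 p2 * (A p2 r1 * A p1 r2) else 0) +
       (if u = r1 then 0 else if p1 = p2 then 0 else
          if p2 = u then A p1 r1 * A p2 r2 else 0)) := by
    intro u
    rw [mulS_apply, SA2_apply, SA2_apply]
    simp only []
    split_ifs <;> (try subst_vars) <;> first | ring1 | (simp_all; done)
  rw [Finset.sum_congr rfl (fun u _ => expand u)]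
  clear expand
  simp only [Finset.sum_add_distrib, Finset.sum_ite_irrel, Finset.sum_const_zero,
    sum_guard, Finset.sum_ite_eq, Finset.sum_ite_eq', Finset.mem_univ, if_true,
    ← Finset.mul_sum]
  split_ifs <;> (try subst_vars) <;>
    (try simp only [sum_guard, ite_self, eq_self_iff_true, if_true, if_false,
      Finset.sum_const_zero]) <;>
    first | ring1 | (simp_all; done) | (simp_all; ring1) | (simp_all; ring_nf)

lemma A2B_apply (p1 p2 r1 r2 : Fin n) :
    (A2 A * (braidS n q * A2 A * braidS n q)) (p1, p2) (r1, r2) =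
      (if p1 = r1 then sCoeff q r1 r2 * ∑ u, sCoeff q p1 u * A p2 u * A u r2
       else sCoeff q r1 r2 * (A p2 r1 * A p1 r2)) +
      (if r2 = r1 then 0 else
        if p1 = r2 then ∑ u, sCoeff q p1 u * A p2 u * A u r1
        else A p1 r1 * A p2 r2) := by
  classical
  rw [A2mul_apply]
  have expand : ∀ u : Fin n,
      A p2 u * (braidS n q * A2 A * braidS n q) (p1, u) (r1, r2) =
      (if p1 = r1 then sCoeff q r1 r2 * (sCoeff q p1 u * A p2 u * A u r2) else 0) +
      (if u = r1 then (if p1 = r1 then 0 else sCoeff q r1 r2 * (A p2 r1 * A p1 r2)) else 0) +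
      ((if r2 = r1 then 0 else if p1 = r2 then sCoeff q p1 u * A p2 u * A u r1 else 0) +
       (if r2 = r1 then 0 else if u = r2 then
          (if p1 = r2 then 0 else A p1 r1 * A p2 r2) else 0)) := by
    intro u
    rw [mulS_apply, SA2_apply, SA2_apply]
    simp only []
    split_ifs <;> (try subst_vars) <;> first | ring1 | (simp_all; done)
  rw [Finset.sum_congr rfl (fun u _ => expand u)]
  clear expand
  simp only [Finset.sum_add_distrib, Finset.sum_ite_irrel, Finset.sum_const_zero,
    sum_guard, Finset.sum_ite_eq, Finset.sum_ite_eq', Finset.mem_univ, if_true,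
    ← Finset.mul_sum]
  split_ifs <;> (try subst_vars) <;>
    (try simp only [sum_guard, ite_self, eq_self_iff_true, if_true, if_false,
      Finset.sum_const_zero]) <;>
    first | ring1 | (simp_all; done) | (simp_all; ring1) | (simp_all; ring_nf)

end Infra

set_option maxHeartbeats 0 in
/-- The Type 2 family solves the reflection equation. Here `Y ⊂ [1,n]` is given
as a `Finset (Fin n)` (0-based indices), `σ` is strictly decreasing on `Y`,
fixed-point-free on `Y`, with `σ(Y) ∩ Y = ∅`; `b` is any integer with
`b₋ ≤ b < b₊`, which is expressed by: every element of `Y₋ ∪ σ(Y₊)` is `≤ b`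
and every element of `Y₊ ∪ σ(Y₋)` is `> b` (in 1-based numbering), and
`A = λ Σ_{i=1}^{b} e^i_i + Σ_{i∈Y} y_i e^{σ(i)}_i`. -/
theorem typeTwo_solves_RE (n : ℕ) (hn : 1 ≤ n) (q : ℂ) (hq : q ≠ 0)
    (hq2 : q ^ 2 ≠ 1) (Y : Finset (Fin n)) (σ : Fin n → Fin n)
    (hdec : ∀ i ∈ Y, ∀ j ∈ Y, (i : ℕ) < (j : ℕ) → (σ j : ℕ) < (σ i : ℕ))
    (hfix : ∀ i ∈ Y, σ i ≠ i)
    (hdisj : ∀ i ∈ Y, σ i ∉ Y)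
    (b : ℕ) (hbn : b ≤ n)
    (hb : ∀ i ∈ Y,
      ((i : ℕ) < (σ i : ℕ) → (i : ℕ) + 1 ≤ b ∧ b ≤ (σ i : ℕ)) ∧
      ((σ i : ℕ) < (i : ℕ) → (σ i : ℕ) + 1 ≤ b ∧ b ≤ (i : ℕ)))
    (lam : ℂ) (y : Fin n → ℂ) (hy : ∀ i ∈ Y, y i ≠ 0) :
    RE n q (fun j i =>
      (if j = i ∧ (i : ℕ) + 1 ≤ b then lam else 0) +
      (if i ∈ Y ∧ j = σ i then y i else 0)) := by
  classical
  set A : Matrix (Fin n) (Fin n) ℂ := fun j i =>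
      (if j = i ∧ (i : ℕ) + 1 ≤ b then lam else 0) +
      (if i ∈ Y ∧ j = σ i then y i else 0) with hAdef
  show braidS n q * A2 A * braidS n q * A2 A = A2 A * braidS n q * A2 A * braidS n q
  have hdich : ∀ z ∈ Y,
      ((z : ℕ) < (σ z : ℕ) ∧ (z : ℕ) + 1 ≤ b ∧ b ≤ (σ z : ℕ)) ∨
      ((σ z : ℕ) < (z : ℕ) ∧ (σ z : ℕ) + 1 ≤ b ∧ b ≤ (z : ℕ)) := by
    intro z hz
    have h := hb z hz
    have hne : (σ z : ℕ) ≠ (z : ℕ) := fun hh => hfix z hz (Fin.ext hh)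
    rcases Nat.lt_or_ge (z : ℕ) (σ z : ℕ) with h1 | h1
    · exact Or.inl ⟨h1, h.1 h1⟩
    · have h2 : (σ z : ℕ) < (z : ℕ) := lt_of_le_of_ne h1 hne
      exact Or.inr ⟨h2, h.2 h2⟩
  have hT : ∀ c x z : Fin n, (∑ u, sCoeff q c u * A x u * A u z) =
      (if (z : ℕ) + 1 ≤ b then sCoeff q c z * A x z * lam else 0) +
      (if z ∈ Y then sCoeff q c (σ z) * A x (σ z) * y z else 0) := by
    intro c x z
    have hAez : ∀ u : Fin n, A u z =
        (if u = z then (if (z : ℕ) + 1 ≤ b then lam else 0) else 0) +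
        (if u = σ z then (if z ∈ Y then y z else 0) else 0) := by
      intro u
      by_cases h1 : u = z <;> by_cases h2 : (z : ℕ) + 1 ≤ b <;>
        by_cases h3 : z ∈ Y <;> by_cases h4 : u = σ z <;>
        simp [hAdef, h1, h2, h3, h4] <;>
        first
        | (intro h; exact absurd h (by omega))
        | (subst h4; simp [h1])
        | (subst h4; intro h; exact absurd h h1)
    rw [Finset.sum_congr rfl (fun u _ => by rw [hAez u])]
    simp only [mul_add, mul_ite, mul_zero, Finset.sum_add_distrib,
      Finset.sum_ite_eq', Finset.mem_univ, if_true]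
    all_goals first
    | rfl
    | ring1
    | (split_ifs <;> first | rfl | ring1)
  have key : ∀ p1 p2 r1 r2 : Fin n,
      ((if p1 = r1 then sCoeff q p1 p2 * ∑ u, sCoeff q r1 u * A p2 u * A u r2
       else sCoeff q p1 p2 * (A p2 r1 * A p1 r2)) +
      (if p1 = p2 then 0 else
        if p2 = r1 then ∑ u, sCoeff q r1 u * A p1 u * A u r2
        else A p1 r1 * A p2 r2)) =
      ((if p1 = r1 then sCoeff q r1 r2 * ∑ u, sCoeff q p1 u * A p2 u * A u r2
       else sCoeff q r1 r2 * (A p2 r1 * A p1 r2)) +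
      (if r2 = r1 then 0 else
        if p1 = r2 then ∑ u, sCoeff q p1 u * A p2 u * A u r1
        else A p1 r1 * A p2 r2)) := by
    intro p1 p2 r1 r2
    simp only [hT]
    simp only [hAdef]
    by_cases hY2 : r2 ∈ Y
    · have hs2 : σ r2 ∉ Y := hdisj r2 hY2
      have hfd2 := hdich r2 hY2
      by_cases hY1 : r1 ∈ Y
      · have hs1 : σ r1 ∉ Y := hdisj r1 hY1
        have hfd1 := hdich r1 hY1
        have hd12 : (r1 : ℕ) < (r2 : ℕ) → ((σ r2 : ℕ) < (σ r1 : ℕ)) := hdec r1 hY1 r2 hY2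
        have hd21 : (r2 : ℕ) < (r1 : ℕ) → ((σ r1 : ℕ) < (σ r2 : ℕ)) := hdec r2 hY2 r1 hY1
        have hv1 : (r1 : ℕ) ≠ ((σ r2) : ℕ) := fun h => hs2 (Fin.ext h ▸ hY1)
        have hv2 : (r2 : ℕ) ≠ ((σ r1) : ℕ) := fun h => hs1 (Fin.ext h ▸ hY2)
        have hσeq : (r1 : ℕ) = (r2 : ℕ) → ((σ r1 : Fin n) : ℕ) = ((σ r2 : Fin n) : ℕ) :=
          fun h => by rw [show r1 = r2 from Fin.ext h]
        rcases hfd1 with ⟨ha1, hb1, hc1⟩ | ⟨ha1, hb1, hc1⟩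
        · rcases hfd2 with ⟨ha2, hb2, hc2⟩ | ⟨ha2, hb2, hc2⟩
          · -- r1 ∈ Y₋, r2 ∈ Y₋
            have cn1 : ¬(((σ r1 : Fin n) : ℕ) + 1 ≤ b) := by omega
            have cn2 : ¬(((σ r2 : Fin n) : ℕ) + 1 ≤ b) := by omega
            simp only [hY1, hY2, hs1, hs2, hb1, hb2, cn1, cn2, true_and, and_true, false_and, and_false,
              if_true, if_false]
            simp only [Fin.ext_iff]
            split_ifs <;>
                first
                | rfl
                | ring1
                | (exfalso; omega)
                | (ring_nf; simp only [sCoeff, Fin.ext_iff]; split_ifs <;>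
                    first | rfl | ring1 | (exfalso; omega) | (field_simp; ring1))

          · -- r1 ∈ Y₋, r2 ∈ Y₊
            have cn1 : ¬(((σ r1 : Fin n) : ℕ) + 1 ≤ b) := by omega
            have cn2 : ¬((r2 : ℕ) + 1 ≤ b) := by omega
            simp only [hY1, hY2, hs1, hs2, hb1, hb2, cn1, cn2, true_and, and_true, false_and, and_false,
              if_true, if_false]
            simp only [Fin.ext_iff]
            split_ifs <;>
                first
                | rfl
                | ring1
                | (exfalso; omega)
                | (ring_nf; simp only [sCoeff, Fin.ext_iff]; split_ifs <;>
                    first | rfl | ring1 | (exfalso; omega) | (field_simp; ring1))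

        · rcases hfd2 with ⟨ha2, hb2, hc2⟩ | ⟨ha2, hb2, hc2⟩
          · -- r1 ∈ Y₊, r2 ∈ Y₋
            have cn1 : ¬((r1 : ℕ) + 1 ≤ b) := by omega
            have cn2 : ¬(((σ r2 : Fin n) : ℕ) + 1 ≤ b) := by omega
            simp only [hY1, hY2, hs1, hs2, hb1, hb2, cn1, cn2, true_and, and_true, false_and, and_false,
              if_true, if_false]
            simp only [Fin.ext_iff]
            split_ifs <;>
                first
                | rfl
                | ring1
                | (exfalso; omega)
                | (ring_nf; simp only [sCoeff, Fin.ext_iff]; split_ifs <;>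
                    first | rfl | ring1 | (exfalso; omega) | (field_simp; ring1))

          · -- r1 ∈ Y₊, r2 ∈ Y₊
            have cn1 : ¬((r1 : ℕ) + 1 ≤ b) := by omega
            have cn2 : ¬((r2 : ℕ) + 1 ≤ b) := by omega
            simp only [hY1, hY2, hs1, hs2, hb1, hb2, cn1, cn2, true_and, and_true, false_and, and_false,
              if_true, if_false]
            simp only [Fin.ext_iff]
            split_ifs <;>
                first
                | rfl
                | ring1
                | (exfalso; omega)
                | (ring_nf; simp only [sCoeff, Fin.ext_iff]; split_ifs <;>
                    first | rfl | ring1 | (exfalso; omega) | (field_simp; ring1))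

      · -- r2 ∈ Y, r1 ∉ Y
        rcases hfd2 with ⟨ha2, hb2, hc2⟩ | ⟨ha2, hb2, hc2⟩
        · -- r2 ∈ Y₋
          have cn2 : ¬(((σ r2 : Fin n) : ℕ) + 1 ≤ b) := by omega
          simp only [hY1, hY2, hs2, hb2, cn2, true_and, and_true, false_and, and_false,
            if_true, if_false]
          simp only [Fin.ext_iff]
          split_ifs <;>
              first
              | rfl
              | ring1
              | (exfalso; omega)
              | (ring_nf; simp only [sCoeff, Fin.ext_iff]; split_ifs <;>
                  first | rfl | ring1 | (exfalso; omega) | (field_simp; ring1))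

        · -- r2 ∈ Y₊
          have cn2 : ¬((r2 : ℕ) + 1 ≤ b) := by omega
          simp only [hY1, hY2, hs2, hb2, cn2, true_and, and_true, false_and, and_false,
            if_true, if_false]
          simp only [Fin.ext_iff]
          split_ifs <;>
              first
              | rfl
              | ring1
              | (exfalso; omega)
              | (ring_nf; simp only [sCoeff, Fin.ext_iff]; split_ifs <;>
                  first | rfl | ring1 | (exfalso; omega) | (field_simp; ring1))

    · by_cases hY1 : r1 ∈ Y
      · have hs1 : σ r1 ∉ Y := hdisj r1 hY1
        have hfd1 := hdich r1 hY1
        rcases hfd1 with ⟨ha1, hb1, hc1⟩ | ⟨ha1, hb1, hc1⟩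
        · -- r1 ∈ Y₋
          have cn1 : ¬(((σ r1 : Fin n) : ℕ) + 1 ≤ b) := by omega
          simp only [hY1, hY2, hs1, hb1, cn1, true_and, and_true, false_and, and_false,
            if_true, if_false]
          simp only [Fin.ext_iff]
          split_ifs <;>
              first
              | rfl
              | ring1
              | (exfalso; omega)
              | (ring_nf; simp only [sCoeff, Fin.ext_iff]; split_ifs <;>
                  first | rfl | ring1 | (exfalso; omega) | (field_simp; ring1))

        · -- r1 ∈ Y₊
          have cn1 : ¬((r1 : ℕ) + 1 ≤ b) := by omega
          simp only [hY1, hY2, hs1, hb1, cn1, true_and, and_true, false_and, and_false,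
            if_true, if_false]
          simp only [Fin.ext_iff]
          split_ifs <;>
              first
              | rfl
              | ring1
              | (exfalso; omega)
              | (ring_nf; simp only [sCoeff, Fin.ext_iff]; split_ifs <;>
                  first | rfl | ring1 | (exfalso; omega) | (field_simp; ring1))

      · -- neither
        simp only [hY1, hY2, true_and, and_true, false_and, and_false,
          if_true, if_false]
        simp only [Fin.ext_iff]
        split_ifs <;>
            first
            | rfl
            | ring1
            | (exfalso; omega)
            | (ring_nf; simp only [sCoeff, Fin.ext_iff]; split_ifs <;>
                first | rfl | ring1 | (exfalso; omega) | (field_simp; ring1))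

  have main : braidS n q * A2 A * braidS n q * A2 A
      = A2 A * (braidS n q * A2 A * braidS n q) := by
    ext p r
    obtain ⟨p1, p2⟩ := p
    obtain ⟨r1, r2⟩ := r
    rw [BA2_apply, A2B_apply]
    exact key p1 p2 r1 r2
  rw [main]
  simp only [mul_assoc]
end

section
/- A Type 1 RE matrix A (with parameters λ, μ, b₋, b₊ and λμ ≠ 0) is diagonalizable over ℂ if and only if λ ≠ μ. -/
open Matrix

/-- Membership in `Y = [1,b₋] ∪ [b₊, b₊+b₋-1]` (1-based). -/
def memY (bm bp k : ℕ) : Prop := (1 ≤ k ∧ k ≤ bm) ∨ (bp ≤ k ∧ k ≤ bp + bm - 1)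

instance (bm bp k : ℕ) : Decidable (memY bm bp k) := by unfold memY; infer_instance

/-- The Type 1 matrix
`A = Σ_{i=1}^{b₋} (λ+μ) e^i_i + Σ_{b₋<i<b₊} λ e^i_i + Σ_{i∈Y} y_i e^{b₊+b₋-i}_i`,
written in 0-based indices (`i : Fin n` corresponds to the 1-based index `i+1`);
the entry in row `j`, column `i` is `A j i`. -/
noncomputable def typeOne (n bm bp : ℕ) (lam mu : ℂ) (y : ℕ → ℂ) :
    Matrix (Fin n) (Fin n) ℂ :=
  fun j i =>
    (if j = i then
       (if (i : ℕ) + 1 ≤ bm then lam + mu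
        else if (i : ℕ) + 1 < bp then lam else 0)
     else 0) +
    (if memY bm bp ((i : ℕ) + 1) ∧ (j : ℕ) + 1 = bp + bm - ((i : ℕ) + 1) then
       y ((i : ℕ) + 1)
     else 0)

open Module Polynomial

/-!
The involution `k ↦ b₊ + b₋ - k` pairs each `k ≤ b₋` with a partner `k'` in `[b₊, b₊+b₋-1]`,
and `A` acts on `e_k, e_k'` by `[[λ+μ, y_k'], [y_k, 0]]`, whose characteristic polynomial is
`(t - λ)(t - μ)` since `y_k y_k' = -λμ`; every other basis vector is an eigenvector for `λ` or
`0`. Hence `(A - λ)(A - μ)A = 0`. For `λ ≠ μ` this polynomial is squarefree (as `λμ ≠ 0`), so `A`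
is semisimple and therefore diagonalizable over `ℂ`. For `λ = μ` the first pair gives
`(A - λ)² e₁ = 0` but `(A - λ) e₁ ≠ 0`, impossible for a diagonalizable matrix.
-/

namespace Matrix

variable {K ι : Type*} [Field K] [Fintype ι] [DecidableEq ι]

theorem exists_isDiag_conj_of_iSup_eigenspace_eq_top (A : Matrix ι ι K)
    (h : ⨆ μ, End.eigenspace (toLin' A) μ = ⊤) :
    ∃ P : Matrix ι ι K, IsUnit P.det ∧ (P⁻¹ * A * P).IsDiag := by
  classical
  have hint := DirectSum.isInternal_submodule_of_iSupIndep_of_iSup_eq_top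
    (End.eigenspaces_iSupIndep (toLin' A)) h
  let v := hint.collectedBasis fun μ ↦ finBasis K (End.eigenspace (toLin' A) μ)
  have : Fintype ((μ : K) × Fin (finrank K (End.eigenspace (toLin' A) μ))) :=
    FiniteDimensional.fintypeBasisIndex v
  let e : _ ≃ ι := Fintype.equivOfCardEq <| by
    rw [← finrank_eq_card_basis v, finrank_fintype_fun_eq_card]
  let b := v.reindex e
  have hb_eig (i : ι) : toLin' A (b i) = (e.symm i).1 • b i := by
    rw [Basis.reindex_apply]
    exact End.mem_eigenspace_iff.mp (hint.collectedBasis_mem _ (e.symm i))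
  have hconj := basis_toMatrix_mul_linearMap_toMatrix_mul_basis_toMatrix
    b (Pi.basisFun K ι) b (Pi.basisFun K ι) (toLin' A)
  rw [LinearMap.toMatrix_eq_toMatrix', LinearMap.toMatrix'_toLin'] at hconj
  have hPQ := (Pi.basisFun K ι).toMatrix_mul_toMatrix_flip b
  refine ⟨(Pi.basisFun K ι).toMatrix b, isUnit_det_of_right_inverse hPQ, ?_⟩
  rw [inv_eq_left_inv (b.toMatrix_mul_toMatrix_flip _), hconj]
  intro i j hij
  rw [LinearMap.toMatrix_apply, hb_eig, map_smul, b.repr_self, Finsupp.smul_apply,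
    Finsupp.single_eq_of_ne hij, smul_zero]

theorem exists_isDiag_conj_of_squarefree_aeval_eq_zero [IsAlgClosed K] (A : Matrix ι ι K)
    {p : K[X]} (hp : Squarefree p) (hA : aeval A p = 0) :
    ∃ P : Matrix ι ι K, IsUnit P.det ∧ (P⁻¹ * A * P).IsDiag := by
  have hf : aeval (toLinAlgEquiv' A) p = 0 := by
    rw [aeval_algHom_apply, hA, map_zero]
  exact exists_isDiag_conj_of_iSup_eigenspace_eq_top A
    (End.isSemisimple_of_squarefree_aeval_eq_zero hp hf).iSup_eigenspace_eq_top

theorem exists_isDiag_conj_of_sub_mul_sub_mul_sub_eq_zero [IsAlgClosed K] (A : Matrix ι ι K)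
    {a b c : K} (hab : a ≠ b) (hac : a ≠ c) (hbc : b ≠ c)
    (h : (A - a • 1) * (A - b • 1) * (A - c • 1) = 0) :
    ∃ P : Matrix ι ι K, IsUnit P.det ∧ (P⁻¹ * A * P).IsDiag := by
  classical
  refine exists_isDiag_conj_of_squarefree_aeval_eq_zero A (p := ∏ x ∈ {a, b, c}, (X - C x))
    (separable_prod_X_sub_C_iff' (f := id).mpr fun _ _ _ _ ↦ id).squarefree ?_
  rw [Finset.prod_insert (by simp [hab, hac]), Finset.prod_pair hbc, ← mul_assoc]
  simpa only [map_mul, map_sub, aeval_X, aeval_C, Algebra.algebraMap_eq_smul_one] using h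

theorem IsDiag.mulVec_eq_zero_of_mul_self_mulVec_eq_zero {R : Type*} [Semiring R]
    [NoZeroDivisors R] {D : Matrix ι ι R} (hD : D.IsDiag) {v : ι → R}
    (h : (D * D) *ᵥ v = 0) : D *ᵥ v = 0 := by
  rw [← hD.diagonal_diag] at h ⊢
  funext i
  have hi := congrFun h i
  simp only [diagonal_mul_diagonal, mulVec_diagonal, Pi.zero_apply, mul_assoc] at hi ⊢
  rcases mul_eq_zero.mp hi with h0 | h0
  · rw [h0, zero_mul]
  · exact h0

theorem isDiag_conj_sub_smul_one {A P : Matrix ι ι K} (hP : IsUnit P.det)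
    (hA : (P⁻¹ * A * P).IsDiag) (c : K) : (P⁻¹ * (A - c • 1) * P).IsDiag := by
  rw [Matrix.mul_sub, Matrix.sub_mul, Matrix.mul_smul, Matrix.smul_mul, Matrix.mul_one,
    nonsing_inv_mul P hP]
  exact hA.sub (isDiag_smul_one ι c)

theorem mulVec_eq_zero_of_mul_self_mulVec_eq_zero {N P : Matrix ι ι K} (hP : IsUnit P.det)
    (hN : (P⁻¹ * N * P).IsDiag) {v : ι → K} (h : (N * N) *ᵥ v = 0) : N *ᵥ v = 0 := by
  have hPinv : P * P⁻¹ = 1 := mul_nonsing_inv P hP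
  have hconj (X : Matrix ι ι K) : (P⁻¹ * X * P) *ᵥ (P⁻¹ *ᵥ v) = P⁻¹ *ᵥ (X *ᵥ v) := by
    rw [mulVec_mulVec, mulVec_mulVec, Matrix.mul_assoc, Matrix.mul_assoc, hPinv,
      Matrix.mul_one]
  have hsq : (P⁻¹ * N * P) * (P⁻¹ * N * P) = P⁻¹ * (N * N) * P := by
    simp only [Matrix.mul_assoc, ← Matrix.mul_assoc P, hPinv, Matrix.one_mul]
  have key := hN.mulVec_eq_zero_of_mul_self_mulVec_eq_zero (v := P⁻¹ *ᵥ v)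
    (by rw [hsq, hconj, h, mulVec_zero])
  rw [hconj] at key
  rw [← one_mulVec (N *ᵥ v), ← hPinv, ← mulVec_mulVec, key, mulVec_zero]

/-- Cayley–Hamilton for the `2 × 2` matrix of trace `l + m` and determinant `l m` by which `M`
acts on the span of `u` and `w`. -/
theorem sub_mul_sub_mulVec_eq_zero_of_pair {R : Type*} [CommRing R] {M : Matrix ι ι R}
    {u w : ι → R} {a b l m : R} (hu : M *ᵥ u = (l + m) • u + a • w) (hw : M *ᵥ w = b • u)
    (hab : a * b = -(l * m)) :
    ((M - l • 1) * (M - m • 1)) *ᵥ u = 0 ∧ ((M - l • 1) * (M - m • 1)) *ᵥ w = 0 := by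
  simp only [← mulVec_mulVec, sub_mulVec, smul_mulVec, one_mulVec, mulVec_sub, mulVec_smul,
    mulVec_add, hu, hw]
  constructor
  · linear_combination (norm := module) hab • u
  · linear_combination (norm := module) hab • w

end Matrix

section TypeOne

variable {n bm bp : ℕ} (hb : bm < bp) (hbn : bm + bp ≤ n + 1) {lam mu : ℂ} {y : ℕ → ℂ}

def typeOneDiag (bm bp : ℕ) (lam mu : ℂ) (k : ℕ) : ℂ :=
  if k ≤ bm then lam + mu else if k < bp then lam else 0

/-- The involution `k ↦ b₊ + b₋ - k` of `Y`, in 0-based indices. -/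
def typeOnePartner (i : Fin n) : Fin n := ⟨bp + bm - 2 - i, by omega⟩

include hb in
lemma typeOne_mulVec_single (i : Fin n) :
    typeOne n bm bp lam mu y *ᵥ Pi.single i 1 =
      typeOneDiag bm bp lam mu ((i : ℕ) + 1) • Pi.single i 1 +
        if memY bm bp ((i : ℕ) + 1) then y ((i : ℕ) + 1) • Pi.single (typeOnePartner hbn i) 1
        else 0 := by
  funext j
  rw [mulVec_single_one, col_apply, Pi.add_apply]
  unfold typeOne
  congr 1
  · simp only [typeOneDiag, Pi.smul_apply, Pi.single_apply, smul_eq_mul, mul_ite,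
      mul_one, mul_zero]
  · by_cases hi : memY bm bp ((i : ℕ) + 1)
    · have hpartner : (j : ℕ) + 1 = bp + bm - ((i : ℕ) + 1) ↔ j = typeOnePartner hbn i := by
        simp only [Fin.ext_iff, typeOnePartner]
        unfold memY at hi
        omega
      simp only [hi, true_and, hpartner, if_true, Pi.smul_apply, Pi.single_apply, smul_eq_mul,
        mul_ite, mul_one, mul_zero]
    · simp [hi]

variable {i : Fin n}

include hb in
lemma val_typeOnePartner_add_one (hi : memY bm bp ((i : ℕ) + 1)) :
    (typeOnePartner hbn i : ℕ) + 1 = bp + bm - ((i : ℕ) + 1) := by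
  simp only [typeOnePartner]
  unfold memY at hi
  omega

include hb in
lemma typeOnePartner_typeOnePartner (hi : memY bm bp ((i : ℕ) + 1)) :
    typeOnePartner hbn (typeOnePartner hbn i) = i := by
  simp only [Fin.ext_iff, typeOnePartner]
  unfold memY at hi
  omega

include hb in
lemma typeOne_mulVec_single_pair (hi : (i : ℕ) + 1 ≤ bm) :
    typeOne n bm bp lam mu y *ᵥ Pi.single i 1 =
        (lam + mu) • Pi.single i 1 + y ((i : ℕ) + 1) • Pi.single (typeOnePartner hbn i) 1 ∧
      typeOne n bm bp lam mu y *ᵥ Pi.single (typeOnePartner hbn i) 1 =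
        y (bp + bm - ((i : ℕ) + 1)) • Pi.single i 1 := by
  have hY : memY bm bp ((i : ℕ) + 1) := Or.inl ⟨by omega, hi⟩
  have hσ := val_typeOnePartner_add_one hb hbn hY
  have hσY : memY bm bp ((typeOnePartner hbn i : ℕ) + 1) := by
    rw [hσ]; unfold memY; omega
  constructor
  · rw [typeOne_mulVec_single hb hbn, typeOneDiag, if_pos hi, if_pos hY]
  · rw [typeOne_mulVec_single hb hbn, typeOneDiag, if_pos hσY, hσ,
      typeOnePartner_typeOnePartner hb hbn hY, if_neg (by omega), if_neg (by omega), zero_smul,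
      zero_add]

include hb hbn in
lemma typeOne_sub_mul_sub_mulVec_single_eq_zero
    (hy : ∀ k : ℕ, memY bm bp k → y k * y (bp + bm - k) = -(lam * mu))
    (hi : (i : ℕ) + 1 < bp + bm) :
    ((typeOne n bm bp lam mu y - lam • 1) * (typeOne n bm bp lam mu y - mu • 1)) *ᵥ
      Pi.single i 1 = 0 := by
  rcases le_or_gt ((i : ℕ) + 1) bm with hle | hgt
  · obtain ⟨h1, h2⟩ := typeOne_mulVec_single_pair hb hbn hle
    exact (sub_mul_sub_mulVec_eq_zero_of_pair h1 h2 (hy _ (Or.inl ⟨by omega, hle⟩))).1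
  rcases lt_or_ge ((i : ℕ) + 1) bp with hlt | hge
  · have hmid : typeOne n bm bp lam mu y *ᵥ Pi.single i 1 = lam • Pi.single i 1 := by
      rw [typeOne_mulVec_single hb hbn, typeOneDiag, if_neg (by omega), if_pos hlt,
        if_neg (by unfold memY; omega), add_zero]
    simp only [← mulVec_mulVec, sub_mulVec, smul_mulVec, one_mulVec, mulVec_sub, mulVec_smul,
      hmid]
    module
  · have hY : memY bm bp ((i : ℕ) + 1) := Or.inr ⟨hge, by omega⟩
    have hp : (typeOnePartner hbn i : ℕ) + 1 ≤ bm := by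
      rw [val_typeOnePartner_add_one hb hbn hY]; omega
    obtain ⟨h1, h2⟩ := typeOne_mulVec_single_pair hb hbn hp
    rw [typeOnePartner_typeOnePartner hb hbn hY] at h1 h2
    exact (sub_mul_sub_mulVec_eq_zero_of_pair h1 h2 (hy _ (Or.inl ⟨by omega, hp⟩))).2

include hb hbn in
lemma typeOne_mulVec_single_of_le (hi : bp + bm ≤ (i : ℕ) + 1) :
    typeOne n bm bp lam mu y *ᵥ Pi.single i 1 = 0 := by
  rw [typeOne_mulVec_single hb hbn, typeOneDiag, if_neg (by omega), if_neg (by omega),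
    if_neg (by unfold memY; omega), zero_smul, add_zero]

include hb hbn in
lemma typeOne_sub_mul_sub_mul_self_eq_zero
    (hy : ∀ k : ℕ, memY bm bp k → y k * y (bp + bm - k) = -(lam * mu)) :
    (typeOne n bm bp lam mu y - lam • 1) * (typeOne n bm bp lam mu y - mu • 1) *
      typeOne n bm bp lam mu y = 0 := by
  refine ext_of_mulVec_single fun i ↦ ?_
  rw [zero_mulVec, ← mulVec_mulVec]
  by_cases hi : (i : ℕ) + 1 < bp + bm
  · rw [typeOne_mulVec_single hb hbn, mulVec_add, mulVec_smul,
      typeOne_sub_mul_sub_mulVec_single_eq_zero hb hbn hy hi, smul_zero, zero_add]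
    split_ifs with hY
    · rw [mulVec_smul, typeOne_sub_mul_sub_mulVec_single_eq_zero hb hbn hy
        (by rw [val_typeOnePartner_add_one hb hbn hY]; omega), smul_zero]
    · exact mulVec_zero _
  · rw [typeOne_mulVec_single_of_le hb hbn (by omega), mulVec_zero]

end TypeOne

theorem typeOne_diagonalizable_iff_general (n : ℕ) (bm bp : ℕ)
    (hbm : 1 ≤ bm) (hb : bm < bp) (hbn : bm + bp ≤ n + 1)
    (lam mu : ℂ) (hlm : lam * mu ≠ 0) (y : ℕ → ℂ)
    (hy : ∀ k : ℕ, memY bm bp k → y k * y (bp + bm - k) = -(lam * mu)) :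
    (∃ P : Matrix (Fin n) (Fin n) ℂ, IsUnit P.det ∧
        (P⁻¹ * typeOne n bm bp lam mu y * P).IsDiag) ↔ lam ≠ mu := by
  constructor
  · rintro ⟨P, hP, hD⟩ rfl
    let i₀ : Fin n := ⟨0, by omega⟩
    obtain ⟨h1, h2⟩ := typeOne_mulVec_single_pair (i := i₀) hb hbn (y := y) (mu := lam) hbm
    have hker := mulVec_eq_zero_of_mul_self_mulVec_eq_zero hP (isDiag_conj_sub_smul_one hP hD lam)
      (sub_mul_sub_mulVec_eq_zero_of_pair h1 h2 (hy 1 (Or.inl ⟨le_rfl, hbm⟩))).1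
    have hne : typeOnePartner hbn i₀ ≠ i₀ := by
      simp only [ne_eq, Fin.ext_iff, typeOnePartner, i₀]; omega
    rw [sub_mulVec, h1, smul_mulVec, one_mulVec] at hker
    have h0 := congrFun hker i₀
    simp only [Pi.sub_apply, Pi.add_apply, Pi.smul_apply, Pi.single_eq_same,
      Pi.single_eq_of_ne' hne, Pi.zero_apply, smul_eq_mul] at h0
    exact left_ne_zero_of_mul hlm (by linear_combination h0)
  · intro hne
    refine exists_isDiag_conj_of_sub_mul_sub_mul_sub_eq_zero _ hne (left_ne_zero_of_mul hlm)
      (right_ne_zero_of_mul hlm) ?_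
    rw [zero_smul, sub_zero]
    exact typeOne_sub_mul_sub_mul_self_eq_zero hb hbn hy

/-- A Type 1 RE matrix is diagonalizable over `ℂ` if and only if `λ ≠ μ`. -/
theorem typeOne_diagonalizable_iff (n : ℕ) (hn : 1 ≤ n) (bm bp : ℕ)
    (hbm : 1 ≤ bm) (hb : bm < bp) (hbn : bm + bp ≤ n + 1)
    (lam mu : ℂ) (hlm : lam * mu ≠ 0) (y : ℕ → ℂ)
    (hy : ∀ k : ℕ, memY bm bp k → y k * y (bp + bm - k) = -(lam * mu)) :
    (∃ P : Matrix (Fin n) (Fin n) ℂ, IsUnit P.det ∧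
        (P⁻¹ * typeOne n bm bp lam mu y * P).IsDiag) ↔ lam ≠ mu :=
  typeOne_diagonalizable_iff_general n bm bp hbm hb hbn lam mu hlm y hy
end

section
/- Let A ∈ M_n(ℂ) be either a Type 1 or Type 2 RE matrix associated with an admissible pair (Y, σ). Then the two-dimensional subspaces V²_i = ℂe^i ⊕ ℂe^{σ(i)} for i ∈ Y, and the one-dimensional subspaces V¹_i = ℂe^i for i ∉ Y ∪ σ(Y), are invariant under A, and ℂ^n is the direct sum of the V²_i for i ∈ Y with i < σ(i) (together with i ∈ Y₊ pairs counted once) and the V¹_i. -/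
open Matrix

/-- Submodule of vectors supported where `p` holds. -/
noncomputable def suppSub (n : ℕ) (p : Fin n → Prop) : Submodule ℂ (Fin n → ℂ) where
  carrier := {v | ∀ j, ¬ p j → v j = 0}
  add_mem' := fun ha hb j hj => by
    simp only [Pi.add_apply, ha j hj, hb j hj, add_zero]
  zero_mem' := fun j _ => rfl
  smul_mem' := fun c v hv j hj => by
    simp only [Pi.smul_apply, hv j hj, smul_zero]

lemma mem_suppSub {n : ℕ} {p : Fin n → Prop} {v : Fin n → ℂ} :
    v ∈ suppSub n p ↔ ∀ j, ¬ p j → v j = 0 := Iff.rfl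

lemma single_mem_suppSub {n : ℕ} {p : Fin n → Prop} {a : Fin n} (h : p a) :
    Pi.single a (1 : ℂ) ∈ suppSub n p := by
  intro j hj
  have hja : j ≠ a := fun e => hj (by rw [e]; exact h)
  exact Pi.single_eq_of_ne hja _

lemma suppSub_mono {n : ℕ} {p q : Fin n → Prop} (h : ∀ j, p j → q j) :
    suppSub n p ≤ suppSub n q := fun v hv j hj => hv j (fun hp => hj (h j hp))

/-- Invariant subspaces and direct-sum decomposition for a matrix associated
with an admissible pair `(Y, σ)`: the planes `V²_i = ℂe^i ⊕ ℂe^{σ(i)}` for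
`i ∈ Y` and the lines `V¹_i = ℂe^i` for `i ∉ Y ∪ σ(Y)` are `A`-invariant, and
`ℂ^n` is the internal direct sum of the `V²_i` (each pair counted once: `i ∈ Y`
with `i < σ(i)`, or `i ∈ Y₊` with `σ(i) ∉ Y`) together with the `V¹_i`. -/
theorem admissible_invariant_subspaces (n : ℕ) (hn : 1 ≤ n)
    (Y : Finset (Fin n)) (σ : Fin n → Fin n)
    (hdec : ∀ i ∈ Y, ∀ j ∈ Y, (i : ℕ) < (j : ℕ) → (σ j : ℕ) < (σ i : ℕ))
    (hfix : ∀ i ∈ Y, σ i ≠ i)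
    (hY0 : ∀ m ∈ Y, (σ m ∈ Y ∧ σ (σ m) = m) ∨ σ m ∉ Y)
    (x : Fin n → ℂ) (y : Fin n → ℂ) (hy : ∀ i ∈ Y, y i ≠ 0)
    (hx : ∀ i ∈ Y, σ i ∉ Y → x (σ i) = 0)
    (A : Matrix (Fin n) (Fin n) ℂ)
    (hA : A = fun j i : Fin n =>
      (if j = i then x i else 0) + (if i ∈ Y ∧ j = σ i then y i else 0))
    (V2 : Fin n → Submodule ℂ (Fin n → ℂ))
    (hV2 : ∀ i, V2 i = Submodule.span ℂ {Pi.single i (1 : ℂ), Pi.single (σ i) 1})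
    (V1 : Fin n → Submodule ℂ (Fin n → ℂ))
    (hV1 : ∀ i, V1 i = Submodule.span ℂ {Pi.single i (1 : ℂ)})
    (W : Fin n → Submodule ℂ (Fin n → ℂ))
    (hW : ∀ i, W i =
      if i ∈ Y ∧ ((i : ℕ) < (σ i : ℕ) ∨ σ i ∉ Y) then V2 i
      else if i ∉ Y ∧ i ∉ Finset.image σ Y then V1 i
      else ⊥) :
    (∀ i ∈ Y, Submodule.map A.mulVecLin (V2 i) ≤ V2 i) ∧
    (∀ i : Fin n, i ∉ Y → i ∉ Finset.image σ Y →
      Submodule.map A.mulVecLin (V1 i) ≤ V1 i) ∧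
    DirectSum.IsInternal W := by
  classical
  -- injectivity of σ on Y
  have hinj : ∀ i ∈ Y, ∀ i' ∈ Y, σ i = σ i' → i = i' := by
    intro i hi i' hi' h
    by_contra hne
    rcases lt_or_gt_of_ne (fun e : (i : ℕ) = (i' : ℕ) => hne (Fin.ext e)) with hlt | hlt
    · exact absurd (h ▸ hdec i hi i' hi' hlt) (lt_irrefl _)
    · exact absurd (h ▸ hdec i' hi' i hi hlt) (lt_irrefl _)
  -- action of A on basis vectors
  have hAe : ∀ i : Fin n, A.mulVec (Pi.single i (1 : ℂ)) =
      (fun j => (if j = i then x i else 0) + (if i ∈ Y ∧ j = σ i then y i else 0)) := by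
    intro i
    rw [Matrix.mulVec_single, hA]
    funext j
    simp
    rfl
  have hAeY : ∀ i ∈ Y, A.mulVec (Pi.single i (1 : ℂ)) =
      x i • (Pi.single i 1 : Fin n → ℂ) + y i • (Pi.single (σ i) 1 : Fin n → ℂ) := by
    intro i hi
    rw [hAe i]
    funext j
    simp only [Pi.add_apply, Pi.smul_apply, Pi.single_apply, smul_eq_mul]
    by_cases h1 : j = i
    · subst h1
      rw [if_pos rfl, if_neg (fun hc : j ∈ Y ∧ j = σ j => hfix j hi hc.2.symm),
        if_pos rfl, if_neg (fun e : j = σ j => hfix j hi e.symm)]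
      ring
    · by_cases h2 : j = σ i
      · rw [if_neg h1, if_pos ⟨hi, h2⟩, if_neg h1, if_pos h2]; ring
      · rw [if_neg h1, if_neg (fun hc => h2 hc.2), if_neg h1, if_neg h2]; ring
  have hAeN : ∀ i : Fin n, i ∉ Y → A.mulVec (Pi.single i (1 : ℂ)) =
      x i • (Pi.single i 1 : Fin n → ℂ) := by
    intro i hi
    rw [hAe i]
    funext j
    simp only [Pi.smul_apply, Pi.single_apply, smul_eq_mul]
    by_cases h1 : j = i
    · rw [if_pos h1, if_neg (fun hc => hi hc.1), if_pos h1]; ring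
    · rw [if_neg h1, if_neg (fun hc => hi hc.1), if_neg h1]; ring
  -- invariance of V2 for i ∈ Y
  have inv2 : ∀ i ∈ Y, Submodule.map A.mulVecLin (V2 i) ≤ V2 i := by
    intro i hi
    rw [Submodule.map_le_iff_le_comap, hV2 i, Submodule.span_le]
    rintro v (rfl | rfl) <;>
      simp only [SetLike.mem_coe, Submodule.mem_comap, Matrix.mulVecLin_apply]
    · rw [hAeY i hi]
      exact Submodule.add_mem _
        (Submodule.smul_mem _ _ (Submodule.subset_span (Set.mem_insert _ _)))
        (Submodule.smul_mem _ _ (Submodule.subset_span (Set.mem_insert_of_mem _ rfl)))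
    · rcases hY0 i hi with ⟨hσY, hσσ⟩ | hσY
      · rw [hAeY (σ i) hσY, hσσ]
        exact Submodule.add_mem _
          (Submodule.smul_mem _ _ (Submodule.subset_span (Set.mem_insert_of_mem _ rfl)))
          (Submodule.smul_mem _ _ (Submodule.subset_span (Set.mem_insert _ _)))
      · rw [hAeN (σ i) hσY]
        exact Submodule.smul_mem _ _ (Submodule.subset_span (Set.mem_insert_of_mem _ rfl))
  -- invariance of V1
  have inv1 : ∀ i : Fin n, i ∉ Y → i ∉ Finset.image σ Y →
      Submodule.map A.mulVecLin (V1 i) ≤ V1 i := by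
    intro i hi _
    rw [Submodule.map_le_iff_le_comap, hV1 i, Submodule.span_le]
    rintro v rfl
    simp only [SetLike.mem_coe, Submodule.mem_comap, Matrix.mulVecLin_apply]
    rw [hAeN i hi]
    exact Submodule.smul_mem _ _ (Submodule.subset_span rfl)
  refine ⟨inv2, inv1, ?_⟩
  -- the block function
  set f : Fin n → Fin n := fun j =>
    if j ∈ Y then (if (j : ℕ) < (σ j : ℕ) ∨ σ j ∉ Y then j else σ j)
    else if h2 : j ∈ Finset.image σ Y then (Finset.mem_image.mp h2).choose else j
    with hf
  -- computation rules for f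
  have hfY1 : ∀ j, j ∈ Y → ((j : ℕ) < (σ j : ℕ) ∨ σ j ∉ Y) → f j = j := by
    intro j hj hc
    rw [hf]; dsimp only; rw [if_pos hj, if_pos hc]
  have hfY2 : ∀ j, j ∈ Y → ¬ ((j : ℕ) < (σ j : ℕ) ∨ σ j ∉ Y) → f j = σ j := by
    intro j hj hc
    rw [hf]; dsimp only; rw [if_pos hj, if_neg hc]
  have hfN1 : ∀ j, j ∉ Y → (h2 : j ∈ Finset.image σ Y) → f j ∈ Y ∧ σ (f j) = j := by
    intro j hj h2
    rw [hf]; dsimp only; rw [if_neg hj, dif_pos h2]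
    exact (Finset.mem_image.mp h2).choose_spec
  have hfN2 : ∀ j, j ∉ Y → j ∉ Finset.image σ Y → f j = j := by
    intro j hj h2
    rw [hf]; dsimp only; rw [if_neg hj, dif_neg h2]
  -- f (σ i) = i when i ∈ Y and σ i ∉ Y
  have hfσ : ∀ i ∈ Y, σ i ∉ Y → f (σ i) = i := by
    intro i hi hσY
    have h2 : σ i ∈ Finset.image σ Y := Finset.mem_image.mpr ⟨i, hi, rfl⟩
    obtain ⟨h3, h4⟩ := hfN1 (σ i) hσY h2
    exact hinj _ h3 i hi h4
  -- each basis vector lies in W (f j)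
  have hsingle : ∀ j : Fin n, Pi.single j (1 : ℂ) ∈ W (f j) := by
    intro j
    by_cases hj : j ∈ Y
    · by_cases hc : (j : ℕ) < (σ j : ℕ) ∨ σ j ∉ Y
      · rw [hfY1 j hj hc, hW j, if_pos ⟨hj, hc⟩, hV2 j]
        exact Submodule.subset_span (Set.mem_insert _ _)
      · push_neg at hc
        obtain ⟨hle, hσY⟩ := hc
        have hσσ : σ (σ j) = j := ((hY0 j hj).resolve_right (fun h => h hσY)).2
        have hlt : (σ j : ℕ) < (j : ℕ) :=
          lt_of_le_of_ne hle (fun e => hfix j hj (Fin.ext e))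
        rw [hfY2 j hj (by push_neg; exact ⟨hle, hσY⟩),
          hW (σ j), if_pos ⟨hσY, Or.inl (by rw [hσσ]; exact hlt)⟩, hV2 (σ j)]
        exact Submodule.subset_span (Set.mem_insert_of_mem _ (by rw [hσσ]; exact rfl))
    · by_cases h2 : j ∈ Finset.image σ Y
      · obtain ⟨h3, h4⟩ := hfN1 j hj h2
        have hσfY : σ (f j) ∉ Y := by rw [h4]; exact hj
        rw [hW (f j), if_pos ⟨h3, Or.inr hσfY⟩, hV2 (f j)]
        exact Submodule.subset_span (Set.mem_insert_of_mem _ (by rw [h4]; exact rfl))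
      · rw [hfN2 j hj h2, hW j, if_neg (fun h => hj h.1), if_pos ⟨hj, h2⟩, hV1 j]
        exact Submodule.subset_span rfl
  -- each W i is supported on its block
  have hsupp : ∀ i : Fin n, W i ≤ suppSub n (fun j => f j = i) := by
    intro i
    rw [hW i]
    by_cases hc : i ∈ Y ∧ ((i : ℕ) < (σ i : ℕ) ∨ σ i ∉ Y)
    · rw [if_pos hc, hV2 i, Submodule.span_le]
      obtain ⟨hiY, hcond⟩ := hc
      have hfi : f i = i := hfY1 i hiY hcond
      have hfσi : f (σ i) = i := by
        by_cases hσY : σ i ∈ Y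
        · have hσσ : σ (σ i) = i := ((hY0 i hiY).resolve_right (fun h => h hσY)).2
          have hlt : (i : ℕ) < (σ i : ℕ) := hcond.resolve_right (fun h => h hσY)
          have h1 : ¬ ((σ i : ℕ) < (σ (σ i) : ℕ) ∨ σ (σ i) ∉ Y) := by
            push_neg
            rw [hσσ]
            exact ⟨le_of_lt hlt, hiY⟩
          rw [hfY2 (σ i) hσY h1, hσσ]
        · exact hfσ i hiY hσY
      rintro v (rfl | rfl)
      · exact single_mem_suppSub hfi
      · exact single_mem_suppSub hfσi
    · rw [if_neg hc]
      by_cases hd : i ∉ Y ∧ i ∉ Finset.image σ Y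
      · rw [if_pos hd, hV1 i, Submodule.span_le]
        have hfi : f i = i := hfN2 i hd.1 hd.2
        rintro v rfl
        exact single_mem_suppSub hfi
      · rw [if_neg hd]
        exact bot_le
  -- independence
  have hindep : iSupIndep W := by
    rw [iSupIndep_def]
    intro i
    rw [disjoint_iff_inf_le]
    intro v hv
    have h1 : v ∈ suppSub n (fun j => f j = i) := hsupp i hv.1
    have h2 : v ∈ suppSub n (fun j => f j ≠ i) := by
      have hle : (⨆ j, ⨆ (_ : j ≠ i), W j) ≤ suppSub n (fun j => f j ≠ i) := by
        refine iSup₂_le fun j hj => le_trans (hsupp j) (suppSub_mono ?_)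
        intro k hk
        rw [hk]; exact hj
      exact hle hv.2
    show v ∈ (⊥ : Submodule ℂ (Fin n → ℂ))
    rw [Submodule.mem_bot]
    funext j
    by_cases hj : f j = i
    · exact h2 j (fun h => h hj)
    · exact h1 j hj
  -- spanning
  have htop : iSup W = ⊤ := by
    refine le_antisymm le_top ?_
    rw [← (Pi.basisFun ℂ (Fin n)).span_eq, Submodule.span_le]
    rintro v ⟨j, rfl⟩
    rw [Pi.basisFun_apply]
    exact Submodule.mem_iSup_of_mem (f j) (hsingle j)
  exact DirectSum.isInternal_submodule_of_iSupIndep_of_iSup_eq_top hindep htop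
end

section
/- If A ∈ End(ℂ^n) is an invertible solution of the reflection equation with the standard Uq(gl(n)) braid matrix (q generic), then A is of Type 1 with b₋ + b₊ = n + 1 and λ ≠ 0 ≠ μ; in particular, A has exactly two distinct nonzero eigenvalues λ and μ (or a single eigenvalue if λ = μ), its diagonal entries are λ+μ in positions 1..b₋, λ in positions b₋+1..b₊-1, 0 in positions b₊..n, and its off-diagonal entries y_i = A^{n+1-i}_i satisfy y_i y_{n+1-i} = -λμ for i ∈ [1,b₋] ∪ [b₊,n]. -/
open Matrix Kronecker

namespace REcls

variable {n : ℕ} {q : ℂ} {A : Matrix (Fin n) (Fin n) ℂ}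

noncomputable def Bsum (A : Matrix (Fin n) (Fin n) ℂ) (q : ℂ) (b d a : Fin n) : ℂ :=
  ∑ x, sCoeff q a x * (A b x * A x d)

lemma sum_two {f : Fin n → ℂ} {u v : Fin n} (huv : u ≠ v)
    (h : ∀ x, x ≠ u → x ≠ v → f x = 0) : ∑ x, f x = f u + f v := by
  rw [← Finset.sum_pair huv]
  refine (Finset.sum_subset (Finset.subset_univ _) ?_).symm
  intro x _ hx
  simp only [Finset.mem_insert, Finset.mem_singleton, not_or] at hx
  exact h x hx.1 hx.2

lemma A2_apply (a b c d : Fin n) : A2 A (a,b) (c,d) = if a = c then A b d else 0 := by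
  simp [A2, Matrix.kroneckerMap_apply, Matrix.one_apply, ite_mul, one_mul, zero_mul]

lemma S_mul_apply (M : Matrix (Fin n × Fin n) (Fin n × Fin n) ℂ) (a b : Fin n)
    (Q : Fin n × Fin n) :
    (braidS n q * M) (a,b) Q
      = sCoeff q a b * M (a,b) Q + (if a = b then 0 else M (b,a) Q) := by
  rw [Matrix.mul_apply]
  rw [Fintype.sum_prod_type]
  simp only [braidS, add_mul, Finset.sum_add_distrib]
  congr 1
  · simp [ite_and, Finset.sum_ite_eq]
  · by_cases hab : a = b
    · simp [hab]
    · simp only [ne_eq, hab, not_false_eq_true, true_and, if_neg hab]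
      simp [ite_and, Finset.sum_ite_eq, eq_comm]

lemma A2_mul_apply (M : Matrix (Fin n × Fin n) (Fin n × Fin n) ℂ) (a b : Fin n)
    (Q : Fin n × Fin n) :
    (A2 A * M) (a,b) Q = ∑ x, A b x * M (a,x) Q := by
  rw [Matrix.mul_apply, Fintype.sum_prod_type]
  simp only [A2_apply]
  simp [ite_and, Finset.sum_ite_eq, Finset.mul_sum]

end REcls

namespace REcls
variable {n : ℕ} {q : ℂ} {A : Matrix (Fin n) (Fin n) ℂ}

lemma SA2_apply (p1 p2 c d : Fin n) :
    (braidS n q * A2 A) (p1,p2) (c,d)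
      = if p1 = c then sCoeff q p1 p2 * A p2 d else if p2 = c then A p1 d else 0 := by
  rw [S_mul_apply, A2_apply, A2_apply]
  by_cases h1 : p1 = c
  · subst h1
    rcases eq_or_ne p1 p2 with h|h <;> simp [h]
    intro h'; exact absurd h'.symm h
  · rcases eq_or_ne p1 p2 with h|h
    · subst h; simp [h1]
    · simp [h1, h]

lemma lhs_inner (p1 p2 c d : Fin n) :
    (A2 A * (braidS n q * A2 A)) (p1,p2) (c,d)
      = if p1 = c then Bsum A q p2 d p1 else A p2 c * A p1 d := by
  rw [A2_mul_apply]
  simp only [SA2_apply]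
  by_cases h : p1 = c
  · subst h
    rw [if_pos rfl, Bsum]
    exact Finset.sum_congr rfl fun x _ => by rw [if_pos rfl]; ring
  · rw [if_neg h, Finset.sum_eq_single c]
    · rw [if_neg h, if_pos rfl]
    · intro x _ hx; rw [if_neg h, if_neg hx, mul_zero]
    · intro hc; exact absurd (Finset.mem_univ c) hc

lemma A2S_apply (p1 p2 c d : Fin n) :
    (A2 A * braidS n q) (p1,p2) (c,d)
      = if p1 = c then sCoeff q p1 d * A p2 d else if d = p1 then A p2 c else 0 := by
  rw [A2_mul_apply]
  by_cases h1 : p1 = c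
  · subst h1
    rw [if_pos rfl]
    have hb : ∀ x : Fin n, braidS n q (p1,x) (p1,d) = if x = d then sCoeff q p1 x else 0 := by
      intro x
      have hcontr : ¬(p1 ≠ x ∧ p1 = x ∧ d = p1) := fun ⟨ha,hb,_⟩ => ha hb
      simp only [braidS]
      rcases eq_or_ne x d with h|h
      · subst h
        simp [hcontr]
      · simp [h, hcontr]
    simp only [hb]
    rw [Finset.sum_eq_single d]
    · rw [if_pos rfl]; ring
    · intro x _ hx; rw [if_neg hx, mul_zero]
    · intro hc; exact absurd (Finset.mem_univ d) hc
  · rw [if_neg h1]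
    have hb : ∀ x : Fin n, braidS n q (p1,x) (c,d)
        = if p1 ≠ x ∧ c = x ∧ d = p1 then 1 else 0 := by
      intro x
      have : ¬(p1 = c ∧ x = d) := fun hh => h1 hh.1
      simp only [braidS]
      simp [this]
    simp only [hb]
    by_cases h2 : d = p1
    · rw [if_pos h2, Finset.sum_eq_single c]
      · have : p1 ≠ c ∧ c = c ∧ d = p1 := ⟨h1, rfl, h2⟩
        rw [if_pos this, mul_one]
      · intro x _ hx
        have : ¬(p1 ≠ x ∧ c = x ∧ d = p1) := fun hh => hx hh.2.1.symm
        rw [if_neg this, mul_zero]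
      · intro hc; exact absurd (Finset.mem_univ c) hc
    · rw [if_neg h2, Finset.sum_eq_zero]
      intro x _
      have : ¬(p1 ≠ x ∧ c = x ∧ d = p1) := fun hh => h2 hh.2.2
      rw [if_neg this, mul_zero]

lemma rhs_inner (a b c d : Fin n) :
    (A2 A * (braidS n q * (A2 A * braidS n q))) (a,b) (c,d)
      = (if a = c then sCoeff q a d * Bsum A q b d a else if d = a then Bsum A q b c a else 0)
        + ((if a = c then 0 else sCoeff q c d * (A b c * A a d))
        + (if a = d ∨ d = c then 0 else A b d * A a c)) := by
  rw [A2_mul_apply]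
  have expand : ∀ x : Fin n, A b x * (braidS n q * (A2 A * braidS n q)) (a,x) (c,d)
      = A b x * sCoeff q a x *
          (if a = c then sCoeff q a d * A x d else if d = a then A x c else 0)
        + A b x * (if a = x then 0 else
            (if x = c then sCoeff q x d * A a d else if d = x then A a c else 0)) := by
    intro x
    rw [S_mul_apply, A2S_apply, A2S_apply]
    ring
  rw [Finset.sum_congr rfl (fun x _ => expand x), Finset.sum_add_distrib]
  congr 1
  · by_cases h : a = c
    · subst h
      simp only [eq_self_iff_true, if_true, Bsum, Finset.mul_sum]
      exact Finset.sum_congr rfl fun x _ => by ring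
    · simp only [if_neg h]
      by_cases h2 : d = a
      · simp only [if_pos h2, Bsum]
        exact Finset.sum_congr rfl fun x _ => by ring
      · simp only [if_neg h2, mul_zero, Finset.sum_const_zero]
  · have gz : ∀ x : Fin n, x ≠ c → x ≠ d →
        A b x * (if a = x then 0 else
          (if x = c then sCoeff q x d * A a d else if d = x then A a c else 0)) = 0 := by
      intro x hxc hxd
      rcases eq_or_ne a x with h|h
      · rw [if_pos h, mul_zero]
      · rw [if_neg h, if_neg hxc, if_neg (fun hh => hxd hh.symm), mul_zero]
    by_cases hcd : c = d
    · subst hcd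
      rw [Finset.sum_eq_single c (fun x _ hx => gz x hx hx)
        (fun hc => absurd (Finset.mem_univ c) hc)]
      rw [if_pos (Or.inr rfl), add_zero]
      by_cases hac : a = c
      · rw [if_pos hac, if_pos hac, mul_zero]
      · rw [if_neg hac, if_neg hac, if_pos rfl]; ring
    · rw [sum_two hcd gz]
      have e1 : A b c * (if a = c then (0:ℂ) else
          (if c = c then sCoeff q c d * A a d else if d = c then A a c else 0))
          = (if a = c then 0 else sCoeff q c d * (A b c * A a d)) := by
        by_cases hac : a = c
        · rw [if_pos hac, if_pos hac, mul_zero]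
        · rw [if_neg hac, if_neg hac, if_pos rfl]; ring
      have e2 : A b d * (if a = d then (0:ℂ) else
          (if d = c then sCoeff q d d * A a d else if d = d then A a c else 0))
          = (if a = d ∨ d = c then 0 else A b d * A a c) := by
        by_cases had : a = d
        · rw [if_pos had, if_pos (Or.inl had), mul_zero]
        · rw [if_neg had, if_neg (fun hh => hcd hh.symm), if_pos rfl,
            if_neg (by rintro (h|h); exact had h; exact hcd h.symm)]
      rw [e1, e2]

lemma keyE (hA : RE n q A) (a b c d : Fin n) :
    sCoeff q a b * (if a = c then Bsum A q b d a else A b c * A a d)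
      + (if a = b then 0 else if b = c then Bsum A q a d b else A a c * A b d)
    = (if a = c then sCoeff q a d * Bsum A q b d a else if d = a then Bsum A q b c a else 0)
      + ((if a = c then 0 else sCoeff q c d * (A b c * A a d))
      + (if a = d ∨ d = c then 0 else A b d * A a c)) := by
  have h : (braidS n q * (A2 A * (braidS n q * A2 A))) (a,b) (c,d)
      = (A2 A * (braidS n q * (A2 A * braidS n q))) (a,b) (c,d) := by
    have := hA
    unfold RE at this
    rw [Matrix.mul_assoc, Matrix.mul_assoc, Matrix.mul_assoc, Matrix.mul_assoc] at this
    rw [this]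
  rw [S_mul_apply, lhs_inner, lhs_inner, rhs_inner] at h
  exact h

end REcls

namespace REcls
variable {n : ℕ} {q : ℂ} {A : Matrix (Fin n) (Fin n) ℂ}

lemma sCoeff_lt {a b : Fin n} (h : (a:ℕ) < b) : sCoeff q a b = q - q⁻¹ := if_pos h

lemma sCoeff_self (a : Fin n) : sCoeff (n := n) q a a = q := by
  simp [sCoeff]

lemma sCoeff_gt {a b : Fin n} (h : (b:ℕ) < a) : sCoeff q a b = 0 := by
  rw [sCoeff, if_neg (by omega), if_neg (by intro hh; rw [hh] at h; omega)]

section scalars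
variable (hq : q ≠ 0) (hq2 : q^2 ≠ 1)
include hq hq2

lemma ht : q - q⁻¹ ≠ 0 := by
  intro h
  apply hq2
  have h1 : q = q⁻¹ := sub_eq_zero.mp h
  rw [sq]
  nth_rewrite 2 [h1]
  exact mul_inv_cancel₀ hq

omit hq in
lemma hq_one : q - 1 ≠ 0 := by
  intro h
  apply hq2
  rw [sub_eq_zero.mp h]; ring

lemma hqi_one : q⁻¹ - 1 ≠ 0 := by
  intro h
  apply hq2
  have h1 : q⁻¹ = 1 := sub_eq_zero.mp h
  have h2 : q = 1 := by
    have h3 := congrArg (q * ·) h1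
    exact ((by simpa [mul_inv_cancel₀ hq] using h3 : (1:ℂ) = q)).symm
  rw [h2]; ring

end scalars

set_option linter.unusedSectionVars false

section rels
variable (hq : q ≠ 0) (hq2 : q^2 ≠ 1) (hA : RE n q A)
include hq hq2 hA

lemma row_mul {a c d : Fin n} (h1 : c ≠ a) (h2 : d ≠ a) (h3 : c ≠ d) :
    A a c * A a d = 0 := by
  have h := keyE hA a a c d
  rw [if_neg (Ne.symm h1), if_pos rfl, if_neg (Ne.symm h1), if_neg h2,
    if_neg (Ne.symm h1), if_neg (by rintro (h'|h'); exact h2 h'.symm; exact h3 h'.symm),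
    sCoeff_self] at h
  have key : (q - 1 - sCoeff q c d) * (A a c * A a d) = 0 := by linear_combination h
  rcases lt_or_gt_of_ne (fun hh : (c:ℕ) = (d:ℕ) => h3 (Fin.ext hh)) with hlt|hlt
  · rw [sCoeff_lt hlt] at key
    have h4 : q - 1 - (q - q⁻¹) = q⁻¹ - 1 := by ring
    rw [h4] at key
    exact (mul_eq_zero.mp key).resolve_left (hqi_one hq hq2)
  · rw [sCoeff_gt hlt, sub_zero] at key
    exact (mul_eq_zero.mp key).resolve_left (hq_one hq2)

lemma col_mul {a b c : Fin n} (h1 : a ≠ c) (h2 : b ≠ c) (h3 : a ≠ b) :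
    A b c * A a c = 0 := by
  have h := keyE hA a b c c
  rw [if_neg h1, if_neg h3, if_neg h2, if_neg h1, if_neg (fun hh : c = a => h1 hh.symm),
    if_neg h1, if_pos (Or.inr rfl), sCoeff_self] at h
  have key : (sCoeff q a b + 1 - q) * (A b c * A a c) = 0 := by linear_combination h
  rcases lt_or_gt_of_ne (fun hh : (a:ℕ) = (b:ℕ) => h3 (Fin.ext hh)) with hlt|hlt
  · rw [sCoeff_lt hlt] at key
    have h4 : q - q⁻¹ + 1 - q = -(q⁻¹ - 1) := by ring
    rw [h4, neg_mul, neg_eq_zero] at key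
    exact (mul_eq_zero.mp key).resolve_left (hqi_one hq hq2)
  · rw [sCoeff_gt hlt] at key
    have key2 : (q - 1) * (A b c * A a c) = 0 := by linear_combination -key
    exact (mul_eq_zero.mp key2).resolve_left (hq_one hq2)

lemma rel4 {a b c d : Fin n} (h1 : a ≠ b) (h2 : a ≠ c) (h3 : b ≠ c) (h4 : a ≠ d)
    (h5 : c ≠ d) :
    (sCoeff q a b - sCoeff q c d) * (A b c * A a d) = 0 := by
  have h := keyE hA a b c d
  rw [if_neg h2, if_neg h1, if_neg h3, if_neg h2, if_neg (fun hh : d = a => h4 hh.symm),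
    if_neg h2, if_neg (by rintro (h'|h'); exact h4 h'; exact h5 h'.symm)] at h
  linear_combination h

lemma rel5b {a b d : Fin n} (h1 : a ≠ b) (h2 : b ≠ d) (h3 : a ≠ d) :
    Bsum A q a d b + (sCoeff q a b - sCoeff q b d) * (A b b * A a d)
      = A b d * A a b := by
  have h := keyE hA a b b d
  rw [if_neg h1, if_neg h1, if_pos rfl, if_neg h1, if_neg (fun hh : d = a => h3 hh.symm),
    if_neg h1, if_neg (by rintro (h'|h'); exact h3 h'; exact h2 h'.symm)] at h
  linear_combination h

lemma rel5a {a b : Fin n} (h1 : a ≠ b) :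
    Bsum A q a a b + (sCoeff q a b - sCoeff q b a) * (A a a * A b b)
      = Bsum A q b b a := by
  have h := keyE hA a b b a
  rw [if_neg h1, if_neg h1, if_pos rfl, if_neg h1, if_pos rfl, if_neg h1,
    if_pos (Or.inl rfl)] at h
  linear_combination h

lemma rel2 {a d : Fin n} (h1 : a ≠ d) :
    (q - sCoeff q a d) * Bsum A q a d a = A a d * A a a := by
  have h := keyE hA a a a d
  rw [if_pos rfl, if_pos rfl, if_pos rfl, if_pos rfl,
    if_neg (by rintro (h'|h'); exact h1 h'; exact h1 h'.symm), sCoeff_self] at h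
  linear_combination h

lemma rel3 {a b : Fin n} (h1 : a ≠ b) :
    sCoeff q a b * Bsum A q b a a + A a a * A b a = q * Bsum A q b a a := by
  have h := keyE hA a b a a
  rw [if_pos rfl, if_neg h1, if_neg (Ne.symm h1), if_pos rfl, if_pos rfl,
    if_pos (Or.inl rfl), sCoeff_self] at h
  linear_combination h

end rels
end REcls

namespace REcls
set_option linter.unusedSectionVars false
variable {n : ℕ} {q : ℂ} {A : Matrix (Fin n) (Fin n) ℂ}

lemma initseg {S : Finset (Fin n)} (hS : ∀ x y : Fin n, x ≤ y → y ∈ S → x ∈ S)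
    (x : Fin n) : x ∈ S ↔ (x:ℕ) < S.card := by
  constructor
  · intro hx
    have hsub : Finset.Iic x ⊆ S := fun y hy => hS y x (Finset.mem_Iic.mp hy) hx
    have := Finset.card_le_card hsub
    rw [Fin.card_Iic] at this; omega
  · intro hx
    by_contra hxS
    have hsub : S ⊆ Finset.Iio x := by
      intro y hy
      rw [Finset.mem_Iio]
      rcases lt_or_ge y x with h|h
      · exact h
      · exact absurd (hS x y h hy) hxS
    have := Finset.card_le_card hsub
    rw [Fin.card_Iio] at this; omega

section struc
variable (hq : q ≠ 0) (hq2 : q^2 ≠ 1) (hA : RE n q A)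
include hq hq2 hA

lemma chain_kill {b m d : Fin n} (hbm : A b m ≠ 0) (hmd : A m d ≠ 0)
    (h1 : b ≠ m) (h2 : m ≠ d) (h3 : b ≠ d) : False := by
  have hbd : A b d = 0 := by
    have h := row_mul hq hq2 hA (a := b) (c := m) (d := d) (Ne.symm h1) (Ne.symm h3) h2
    exact (mul_eq_zero.mp h).resolve_left hbm
  have hB : Bsum A q b d m = q * (A b m * A m d) := by
    rw [Bsum, Finset.sum_eq_single m]
    · rw [sCoeff_self]
    · intro x _ hx
      by_cases hxb : x = b
      · subst hxb; rw [hbd, mul_zero, mul_zero]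
      · have hz : A b x = 0 := by
          have h := row_mul hq hq2 hA (a := b) (c := m) (d := x) (Ne.symm h1)
            hxb (Ne.symm hx)
          exact (mul_eq_zero.mp h).resolve_left hbm
        rw [hz, zero_mul, mul_zero]
    · intro h; exact absurd (Finset.mem_univ m) h
  have h5 := rel5b hq hq2 hA (a := b) (b := m) (d := d) h1 h2 h3
  rw [hB, hbd] at h5
  have h0 : (q - 1) * (A b m * A m d) = 0 := by linear_combination h5
  exact (mul_ne_zero hbm hmd) ((mul_eq_zero.mp h0).resolve_left (hq_one hq2))

lemma Dmax1 {r c : Fin n} (h : (r:ℕ) < c) (hy : A r c ≠ 0) : A c c = 0 := by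
  have hne : r ≠ c := by intro hh; subst hh; omega
  have key := rel2 hq hq2 hA (a := r) (d := c) hne
  have hz : ∀ x : Fin n, x ≠ r → x ≠ c → sCoeff q r x * (A r x * A x c) = 0 := by
    intro x hxr hxc
    have h0 := row_mul hq hq2 hA (a := r) (c := c) (d := x) (Ne.symm hne) hxr
      (Ne.symm hxc)
    rw [(mul_eq_zero.mp h0).resolve_left hy, zero_mul, mul_zero]
  have hB : Bsum A q r c r = q * (A r r * A r c) + (q - q⁻¹) * (A r c * A c c) := by
    rw [Bsum, sum_two hne hz, sCoeff_self, sCoeff_lt h]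
  rw [hB, sCoeff_lt h] at key
  have hiq : q⁻¹ * q = 1 := inv_mul_cancel₀ hq
  have h0 : (q⁻¹ * (q - q⁻¹)) * (A r c * A c c) = 0 := by
    linear_combination key - (A r r * A r c) * hiq
  have hfac : q⁻¹ * (q - q⁻¹) ≠ 0 := mul_ne_zero (inv_ne_zero hq) (ht hq hq2)
  have := (mul_eq_zero.mp h0).resolve_left hfac
  exact (mul_eq_zero.mp this).resolve_left hy

lemma Dmax2 {r c : Fin n} (h : (c:ℕ) < r) (hy : A r c ≠ 0) : A r r = 0 := by
  have hne : c ≠ r := by intro hh; subst hh; omega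
  have key := rel3 hq hq2 hA (a := c) (b := r) hne
  have hz : ∀ x : Fin n, x ≠ r → x ≠ c → sCoeff q c x * (A r x * A x c) = 0 := by
    intro x hxr hxc
    have h0 := row_mul hq hq2 hA (a := r) (c := c) (d := x) hne hxr (Ne.symm hxc)
    rw [(mul_eq_zero.mp h0).resolve_left hy, zero_mul, mul_zero]
  have hB : Bsum A q r c c = (q - q⁻¹) * (A r r * A r c) + q * (A r c * A c c) := by
    rw [Bsum, sum_two (Ne.symm hne) hz, sCoeff_lt h, sCoeff_self]
  rw [hB, sCoeff_lt h] at key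
  have hiq : q⁻¹ * q = 1 := inv_mul_cancel₀ hq
  have h0 : (q⁻¹ * (q - q⁻¹)) * (A r r * A r c) = 0 := by
    linear_combination -key - (A r c * A c c) * hiq
  have hfac : q⁻¹ * (q - q⁻¹) ≠ 0 := mul_ne_zero (inv_ne_zero hq) (ht hq hq2)
  have := (mul_eq_zero.mp h0).resolve_left hfac
  exact (mul_eq_zero.mp this).resolve_right hy

lemma det_perm (hinv : IsUnit A.det) : ∃ π : Equiv.Perm (Fin n), ∀ i, A (π i) i ≠ 0 := by
  by_contra hc
  push_neg at hc
  have hz : A.det = 0 := by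
    rw [Matrix.det_apply']
    refine Finset.sum_eq_zero fun π _ => ?_
    obtain ⟨i, hi⟩ := hc π
    rw [show (∏ j, A (π j) j) = 0 from Finset.prod_eq_zero (Finset.mem_univ i) hi, mul_zero]
  rw [hz] at hinv
  exact not_isUnit_zero hinv

lemma sym (hinv : IsUnit A.det) {r c : Fin n} (hrc : r ≠ c) (hy : A r c ≠ 0) :
    A c r ≠ 0 := by
  intro hcr
  obtain ⟨π, hπ⟩ := det_perm hq hq2 hA hinv
  rcases lt_or_gt_of_ne (fun hh : (r:ℕ) = c => hrc (Fin.ext hh)) with h|h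
  · have hcc : A c c = 0 := Dmax1 hq hq2 hA h hy
    have hπc : π c = r := by
      by_contra hne2
      have h1' : π c ≠ c := by
        intro hh
        exact hπ c (by rw [hh]; exact hcc)
      have h0 := col_mul hq hq2 hA (a := π c) (b := r) (c := c) h1' hrc hne2
      exact hπ c ((mul_eq_zero.mp h0).resolve_left hy)
    have hπr : π r = r := by
      by_contra hne2
      have h3' : π r ≠ c := fun hh => hπ r (by rw [hh]; exact hcr)
      exact chain_kill hq hq2 hA (hπ r) hy hne2 hrc h3'
    exact hrc (π.injective (by rw [hπc, hπr])).symm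
  · have hrr : A r r = 0 := Dmax2 hq hq2 hA h hy
    have hπr : π r = r := by
      by_contra hne2
      have h3' : π r ≠ c := fun hh => hπ r (by rw [hh]; exact hcr)
      exact chain_kill hq hq2 hA (hπ r) hy hne2 hrc h3'
    exact hπ r (by rw [hπr]; exact hrr)

end struc
end REcls


open REcls in
/-- An invertible solution of the reflection equation is of Type 1 with
`b₋ + b₊ = n + 1` and `λ ≠ 0 ≠ μ`: its diagonal entries are `λ+μ` in positions
`1..b₋`, `λ` in positions `b₋+1..b₊-1` and `0` in positions `b₊..n`, its only
nonzero off-diagonal entries are `y_i = A^{n+1-i}_i` for `i ∈ [1,b₋] ∪ [b₊,n]`,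
and `y_i y_{n+1-i} = -λμ` (all in 1-based indexing). -/
theorem RE_invertible_classification (n : ℕ) (hn : 1 ≤ n) (q : ℂ) (hq : q ≠ 0)
    (hq2 : q ^ 2 ≠ 1) (A : Matrix (Fin n) (Fin n) ℂ) (hA : RE n q A)
    (hinv : IsUnit A.det) :
    ∃ (bm bp : ℕ) (lam mu : ℂ) (y : ℕ → ℂ),
      bm < bp ∧ bm + bp = n + 1 ∧ lam ≠ 0 ∧ mu ≠ 0 ∧
      (∀ i : Fin n, A i i =
        (if (i : ℕ) + 1 ≤ bm then lam + mu
         else if (i : ℕ) + 1 < bp then lam else 0)) ∧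
      (∀ i j : Fin n, j ≠ i → A j i =
        (if ((i : ℕ) + 1 ≤ bm ∨ bp ≤ (i : ℕ) + 1) ∧ (j : ℕ) + (i : ℕ) + 1 = n
         then y ((i : ℕ) + 1) else 0)) ∧
      (∀ k : ℕ, (1 ≤ k ∧ k ≤ bm) ∨ (bp ≤ k ∧ k ≤ n) →
        y k * y (n + 1 - k) = -(lam * mu)) := by
  classical
  have htne : q - q⁻¹ ≠ 0 := ht hq hq2
  obtain ⟨π, hπ⟩ := det_perm hq hq2 hA hinv
  have hrowu : ∀ i j j' : Fin n, j ≠ i → j' ≠ i → A i j ≠ 0 → A i j' ≠ 0 → j = j' := by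
    intro i j j' hj hj' h h'
    by_contra hne
    exact h' ((mul_eq_zero.mp (row_mul hq hq2 hA hj hj' hne)).resolve_left h)
  have hchoice : ∀ i : Fin n, ∃ j : Fin n,
      (j ≠ i ∧ A i j ≠ 0) ∨ (j = i ∧ ∀ k, k ≠ i → A i k = 0) := by
    intro i
    by_cases h : ∃ k, k ≠ i ∧ A i k ≠ 0
    · obtain ⟨k, h1, h2⟩ := h; exact ⟨k, Or.inl ⟨h1, h2⟩⟩
    · push_neg at h
      exact ⟨i, Or.inr ⟨rfl, fun k hk => h k hk⟩⟩
  choose σ hσ using hchoice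
  have hσoff : ∀ i, σ i ≠ i → A i (σ i) ≠ 0 :=
    fun i hi => ((hσ i).resolve_right (fun hh => hi hh.1)).2
  have hσdiag : ∀ i, σ i = i → ∀ k, k ≠ i → A i k = 0 := by
    intro i hi k hk
    rcases hσ i with h|h
    · exact absurd hi h.1
    · exact h.2 k hk
  have hσeq : ∀ i j, j ≠ i → A i j ≠ 0 → σ i = j := by
    intro i j hj hAij
    rcases hσ i with h|h
    · exact hrowu i (σ i) j h.1 hj h.2 hAij
    · exact absurd (h.2 j hj) hAij
  have hσcol : ∀ i j, j ≠ i → A j i ≠ 0 → σ i = j :=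
    fun i j hji hAji => hσeq i j hji (sym hq hq2 hA hinv hji hAji)
  have hσoff' : ∀ i, σ i ≠ i → A (σ i) i ≠ 0 :=
    fun i hi => sym hq hq2 hA hinv (Ne.symm hi) (hσoff i hi)
  have hσinv : ∀ i, σ i ≠ i → σ (σ i) = i :=
    fun i hi => hσeq (σ i) i (Ne.symm hi) (hσoff' i hi)
  have hσzero : ∀ i j, j ≠ i → j ≠ σ i → A i j = 0 := by
    intro i j h1 h2; by_contra h; exact h2 (hσeq i j h1 h).symm
  have hcolzero : ∀ i j, j ≠ i → j ≠ σ i → A j i = 0 := by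
    intro i j h1 h2; by_contra h; exact h2 (hσcol i j h1 h).symm
  have hfree_ne : ∀ i, σ i = i → A i i ≠ 0 := by
    intro i hi
    have hpi : π i = i := by
      by_contra h
      have h2 := hσcol i (π i) h (hπ i)
      rw [hi] at h2
      exact h h2.symm
    have := hπ i
    rwa [hpi] at this
  have hDmax1' : ∀ i, σ i ≠ i → (i:ℕ) < σ i → A (σ i) (σ i) = 0 :=
    fun i hi h => Dmax1 hq hq2 hA h (hσoff i hi)
  have hDmax2' : ∀ i, σ i ≠ i → (σ i:ℕ) < i → A i i = 0 :=
    fun i hi h => Dmax2 hq hq2 hA h (hσoff i hi)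
  have hDlow : ∀ i, σ i ≠ i → (i:ℕ) < σ i → ∀ b : Fin n, (b:ℕ) < i → A b b = A i i := by
    intro i hi hlt b hb
    have hbi : b ≠ i := by intro h; subst h; omega
    have hbs : b ≠ σ i := by
      intro h
      have : (b:ℕ) = (σ i:ℕ) := by rw [h]
      omega
    have h5 := rel5b hq hq2 hA (a := σ i) (b := b) (d := i) (Ne.symm hbs) hbi hi
    have hz1 : A (σ i) b = 0 := hσzero (σ i) b hbs (by rw [hσinv i hi]; exact hbi)
    have hz2 : A b i = 0 := hcolzero i b hbi hbs
    have hBe : Bsum A q (σ i) i b = (q - q⁻¹) * (A (σ i) i * A i i) := by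
      have hzz : ∀ x : Fin n, x ≠ σ i → x ≠ i → sCoeff q b x * (A (σ i) x * A x i) = 0 := by
        intro x h1 h2
        rw [hσzero (σ i) x h1 (by rw [hσinv i hi]; exact h2), zero_mul, mul_zero]
      rw [Bsum, sum_two hi hzz, hDmax1' i hi hlt, sCoeff_lt hb]
      ring
    rw [hBe, hz1, hz2, sCoeff_gt (show (b:ℕ) < (σ i:ℕ) from by omega), sCoeff_lt hb] at h5
    have h0 : (q - q⁻¹) * A (σ i) i * (A i i - A b b) = 0 := by linear_combination h5
    have := (mul_eq_zero.mp h0).resolve_left (mul_ne_zero htne (hσoff' i hi))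
    exact (sub_eq_zero.mp this).symm
  have hDhigh : ∀ i, σ i ≠ i → (i:ℕ) < σ i → ∀ b : Fin n, (σ i:ℕ) < b → A b b = 0 := by
    intro i hi hlt b hb
    have hbi : b ≠ i := by intro h; subst h; omega
    have hbs : b ≠ σ i := by intro h; subst h; omega
    have h5 := rel5b hq hq2 hA (a := σ i) (b := b) (d := i) (Ne.symm hbs) hbi hi
    have hz1 : A (σ i) b = 0 := hσzero (σ i) b hbs (by rw [hσinv i hi]; exact hbi)
    have hz2 : A b i = 0 := hcolzero i b hbi hbs
    have hBe : Bsum A q (σ i) i b = 0 := by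
      rw [Bsum]
      apply Finset.sum_eq_zero
      intro x _
      by_cases h1 : x = σ i
      · subst h1; rw [hDmax1' i hi hlt, zero_mul, mul_zero]
      · by_cases h2 : x = i
        · subst h2; rw [sCoeff_gt (show (x:ℕ) < (b:ℕ) from by omega), zero_mul]
        · rw [hσzero (σ i) x h1 (by rw [hσinv i hi]; exact h2), zero_mul, mul_zero]
    rw [hBe, hz1, hz2, sCoeff_lt hb, sCoeff_gt (show (i:ℕ) < (b:ℕ) from by omega)] at h5
    have h0 : (q - q⁻¹) * (A b b * A (σ i) i) = 0 := by linear_combination h5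
    have := (mul_eq_zero.mp h0).resolve_left htne
    exact (mul_eq_zero.mp this).resolve_right (hσoff' i hi)
    -- nesting of distinct pairs
  have hnest : ∀ r r' : Fin n, σ r ≠ r → (r:ℕ) < σ r → σ r' ≠ r' → (r':ℕ) < σ r' →
      r' ≠ σ r → (r:ℕ) < (r':ℕ) → (σ r':ℕ) < (σ r:ℕ) := by
    intro r r' h1 h2 h1' h2' hne2 hlt
    have hne : r ≠ r' := by intro h; subst h; omega
    have hcc : σ r ≠ σ r' := by
      intro h
      apply hne
      rw [← hσinv r h1, h, hσinv r' h1']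
    have h4 := rel4 hq hq2 hA (a := r') (b := r) (c := σ r) (d := σ r')
      (Ne.symm hne) hne2 (Ne.symm h1) (by intro h; rw [← h] at h2'; omega) hcc
    have hprod : A r (σ r) * A r' (σ r') ≠ 0 := mul_ne_zero (hσoff r h1) (hσoff r' h1')
    have hs : sCoeff q r' r - sCoeff q (σ r) (σ r') = 0 :=
      (mul_eq_zero.mp h4).resolve_right hprod
    rw [sCoeff_gt hlt] at hs
    rcases Nat.lt_trichotomy ((σ r):ℕ) ((σ r'):ℕ) with h|h|h
    · rw [sCoeff_lt h] at hs
      exact absurd (by linear_combination -hs) htne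
    · exact absurd (Fin.ext h) hcc
    · exact h
  -- dagger relation from rel5a for a pair-min r and any larger b ≠ σ r
  have hdag : ∀ r b : Fin n, σ r ≠ r → (r:ℕ) < σ r → (r:ℕ) < (b:ℕ) → b ≠ σ r →
      sCoeff q b (σ r) * (A r (σ r) * A (σ r) r) + (q - q⁻¹) * (A r r * A b b)
        = Bsum A q b b r := by
    intro r b h1 h2 hlt hbs
    have hbr : r ≠ b := by intro h; subst h; omega
    have h5 := rel5a hq hq2 hA (a := r) (b := b) hbr
    have hBe : Bsum A q r r b = sCoeff q b (σ r) * (A r (σ r) * A (σ r) r) := by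
      rw [Bsum, Finset.sum_eq_single (σ r)]
      · intro x _ hx
        by_cases h3 : x = r
        · subst h3; rw [sCoeff_gt hlt, zero_mul]
        · rw [hσzero r x h3 hx, zero_mul, mul_zero]
      · intro h; exact absurd (Finset.mem_univ (σ r)) h
    rw [hBe, sCoeff_lt hlt, sCoeff_gt hlt] at h5
    linear_combination h5
  -- dagger relation when r is free
  have hdagfree : ∀ r b : Fin n, σ r = r → (r:ℕ) < (b:ℕ) →
      (q - q⁻¹) * (A r r * A b b) = Bsum A q b b r := by
    intro r b hr hlt
    have hbr : r ≠ b := by intro h; subst h; omega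
    have h5 := rel5a hq hq2 hA (a := r) (b := b) hbr
    have hBe : Bsum A q r r b = 0 := by
      rw [Bsum]
      apply Finset.sum_eq_zero
      intro x _
      by_cases h3 : x = r
      · subst h3; rw [sCoeff_gt hlt, zero_mul]
      · rw [hσdiag r hr x h3, zero_mul, mul_zero]
    rw [hBe, sCoeff_lt hlt, sCoeff_gt hlt] at h5
    linear_combination h5
  -- Bsum b b r evaluation for b free
  have hBfree : ∀ r b : Fin n, σ b = b → (r:ℕ) < (b:ℕ) →
      Bsum A q b b r = (q - q⁻¹) * (A b b * A b b) := by
    intro r b hb hlt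
    rw [Bsum, Finset.sum_eq_single b]
    · rw [sCoeff_lt hlt]
    · intro x _ hx
      rw [hσdiag b hb x hx, zero_mul, mul_zero]
    · intro h; exact absurd (Finset.mem_univ b) h
  -- Bsum b b r evaluation for b a pair-max with r < σ b
  have hBmax : ∀ r b : Fin n, σ b ≠ b → (σ b:ℕ) < (b:ℕ) → (r:ℕ) < (σ b:ℕ) →
      Bsum A q b b r = (q - q⁻¹) * (A b (σ b) * A (σ b) b) := by
    intro r b h1 h2 hlt
    have hzz : ∀ x : Fin n, x ≠ b → x ≠ σ b → sCoeff q r x * (A b x * A x b) = 0 := by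
      intro x hx1 hx2
      rw [hσzero b x hx1 hx2, zero_mul, mul_zero]
    rw [Bsum, sum_two (Ne.symm h1) hzz, hDmax2' b h1 h2, sCoeff_lt hlt]
    ring
  -- Bsum b b r evaluation for b a pair-min with r < b
  have hBmin : ∀ r b : Fin n, σ b ≠ b → (b:ℕ) < (σ b:ℕ) → (r:ℕ) < (b:ℕ) →
      Bsum A q b b r = (q - q⁻¹) * (A b b * A b b)
        + (q - q⁻¹) * (A b (σ b) * A (σ b) b) := by
    intro r b h1 h2 hlt
    have hzz : ∀ x : Fin n, x ≠ b → x ≠ σ b → sCoeff q r x * (A b x * A x b) = 0 := by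
      intro x hx1 hx2
      rw [hσzero b x hx1 hx2, zero_mul, mul_zero]
    rw [Bsum, sum_two (Ne.symm h1) hzz, sCoeff_lt hlt,
      sCoeff_lt (show (r:ℕ) < (σ b:ℕ) from by omega)]
  -- free diagonal entries are equal
  have hfree_eq : ∀ a b : Fin n, σ a = a → σ b = b → (a:ℕ) < (b:ℕ) → A a a = A b b := by
    intro a b ha hb hlt
    have h1 := hdagfree a b ha hlt
    rw [hBfree a b hb hlt] at h1
    have h0 : (q - q⁻¹) * A b b * (A a a - A b b) = 0 := by linear_combination h1
    have := (mul_eq_zero.mp h0).resolve_left (mul_ne_zero htne (hfree_ne b hb))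
    exact sub_eq_zero.mp this
  -- no free index below a pair minimum
  have hfree_not_below : ∀ a r : Fin n, σ a = a → σ r ≠ r → (r:ℕ) < (σ r:ℕ) →
      (a:ℕ) < (r:ℕ) → False := by
    intro a r ha hr1 hr2 hlt
    have h1 := hdagfree a r ha hlt
    rw [hBmin a r hr1 hr2 hlt] at h1
    have hDar : A a a = A r r := hDlow r hr1 hr2 a hlt
    have h0 : (q - q⁻¹) * (A r (σ r) * A (σ r) r) = 0 := by
      rw [hDar] at h1
      linear_combination -h1
    have := (mul_eq_zero.mp h0).resolve_left htne
    rcases mul_eq_zero.mp this with h|h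
    · exact hσoff r hr1 h
    · exact hσoff' r hr1 h
  -- Y relation with a free index strictly inside a pair
  have hYfree : ∀ r b : Fin n, σ r ≠ r → (r:ℕ) < (σ r:ℕ) → σ b = b →
      (r:ℕ) < (b:ℕ) → (b:ℕ) < (σ r:ℕ) →
      A r (σ r) * A (σ r) r = A b b * A b b - A r r * A b b := by
    intro r b h1 h2 hb hlt1 hlt2
    have hbs : b ≠ σ r := by intro h; subst h; omega
    have hd := hdag r b h1 h2 hlt1 hbs
    rw [hBfree r b hb hlt1, sCoeff_lt hlt2] at hd
    have h0 : (q - q⁻¹) * (A r (σ r) * A (σ r) r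
        - (A b b * A b b - A r r * A b b)) = 0 := by linear_combination hd
    have := (mul_eq_zero.mp h0).resolve_left htne
    exact sub_eq_zero.mp this
  -- Y values agree across pairs
  have hYY : ∀ r r' : Fin n, σ r ≠ r → (r:ℕ) < (σ r:ℕ) → σ r' ≠ r' →
      (r':ℕ) < (σ r':ℕ) → (r:ℕ) < (r':ℕ) →
      A r (σ r) * A (σ r) r = A r' (σ r') * A (σ r') r' := by
    intro r r' h1 h2 h1' h2' hlt
    have hne2 : r' ≠ σ r := by
      intro h
      rw [h] at h2'
      have := hσinv r h1
      rw [this] at h2'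
      omega
    have hns := hnest r r' h1 h2 h1' h2' hne2 hlt
    have hsne : σ (σ r') ≠ σ r' := by
      rw [hσinv r' h1']
      intro h
      have := congrArg Fin.val h
      omega
    have hd := hdag r (σ r') h1 h2 (show (r:ℕ) < ((σ r'):ℕ) from by omega)
      (fun h => by rw [h] at hns; exact lt_irrefl _ hns)
    rw [hBmax r (σ r') hsne (by rw [hσinv r' h1']; exact h2')
      (by rw [hσinv r' h1']; exact hlt)] at hd
    rw [hσinv r' h1', hDmax1' r' h1' h2', sCoeff_lt hns] at hd
    have h0 : (q - q⁻¹) * (A r (σ r) * A (σ r) r - A r' (σ r') * A (σ r') r') = 0 := by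
      linear_combination hd
    have := (mul_eq_zero.mp h0).resolve_left htne
    exact sub_eq_zero.mp this
    -- the set of pair minima
  set M : Finset (Fin n) := Finset.univ.filter (fun i => σ i ≠ i ∧ (i:ℕ) < (σ i:ℕ))
    with hMdef
  have hMmem : ∀ x : Fin n, x ∈ M ↔ (σ x ≠ x ∧ (x:ℕ) < (σ x:ℕ)) := by
    intro x
    rw [hMdef, Finset.mem_filter]
    simp
  have hMdc : ∀ x y : Fin n, x ≤ y → y ∈ M → x ∈ M := by
    intro x y hxy hy
    rw [hMmem] at hy
    obtain ⟨hy1, hy2⟩ := hy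
    rcases eq_or_lt_of_le hxy with h|h
    · rw [hMmem, h]; exact ⟨hy1, hy2⟩
    · have hxy' : (x:ℕ) < (y:ℕ) := h
      rw [hMmem]
      by_cases hfx : σ x = x
      · exact (hfree_not_below x y hfx hy1 hy2 hxy').elim
      · refine ⟨hfx, ?_⟩
        rcases Nat.lt_trichotomy (x:ℕ) ((σ x):ℕ) with h1|h1|h1
        · exact h1
        · exact absurd (Fin.ext h1).symm hfx
        · exfalso
          have hsx := hσinv x hfx
          have h1' : σ (σ x) ≠ σ x := by
            rw [hsx]; exact Ne.symm hfx
          have hr2 : ((σ x):ℕ) < ((σ (σ x)):ℕ) := by rw [hsx]; exact h1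
          have hne2 : y ≠ σ (σ x) := by
            rw [hsx]; intro h; rw [h] at hxy'; omega
          have hcon := hnest (σ x) y h1' hr2 hy1 hy2 hne2 (by omega)
          rw [hsx] at hcon
          omega
  -- counting: each pair is antidiagonal
  have hF4 : ∀ i : Fin n, i ∈ M → (i:ℕ) + ((σ i):ℕ) + 1 = n := by
    intro i hi
    rw [hMmem] at hi
    obtain ⟨hi1, hi2⟩ := hi
    have hcard : (Finset.Iio i).card = (Finset.Ioi (σ i)).card := by
      apply Finset.card_bij (fun x _ => σ x)
      · intro x hx
        rw [Finset.mem_Iio] at hx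
        have hx' : (x:ℕ) < (i:ℕ) := hx
        have hxM : x ∈ M := hMdc x i (le_of_lt hx) ((hMmem i).mpr ⟨hi1, hi2⟩)
        rw [hMmem] at hxM
        rw [Finset.mem_Ioi]
        have hne2 : i ≠ σ x := by
          intro h
          have h3 := hσinv x hxM.1
          rw [← h] at h3
          have := congrArg Fin.val h3
          omega
        exact hnest x i hxM.1 hxM.2 hi1 hi2 hne2 hx'
      · intro x hx x' hx' hee
        rw [Finset.mem_Iio] at hx hx'
        have hxM := hMdc x i (le_of_lt hx) ((hMmem i).mpr ⟨hi1, hi2⟩)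
        have hxM' := hMdc x' i (le_of_lt hx') ((hMmem i).mpr ⟨hi1, hi2⟩)
        rw [hMmem] at hxM hxM'
        rw [← hσinv x hxM.1, hee, hσinv x' hxM'.1]
      · intro z hz
        rw [Finset.mem_Ioi] at hz
        have hz' : ((σ i):ℕ) < (z:ℕ) := hz
        have hzmax : σ z ≠ z ∧ ((σ z):ℕ) < (z:ℕ) := by
          by_cases h1 : σ z = z
          · exfalso
            exact hfree_ne z h1 (hDhigh i hi1 hi2 z hz')
          · refine ⟨h1, ?_⟩
            rcases Nat.lt_trichotomy ((σ z):ℕ) (z:ℕ) with h2|h2|h2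
            · exact h2
            · exact absurd (Fin.ext h2) h1
            · exfalso
              have hne2 : z ≠ σ i := by intro h; rw [h] at hz'; omega
              have := hnest i z hi1 hi2 h1 h2 hne2 (by omega)
              omega
        have hszi : ((σ z):ℕ) < (i:ℕ) := by
          have hzsne : σ (σ z) ≠ σ z := by rw [hσinv z hzmax.1]; exact Ne.symm hzmax.1
          have hzs2 : ((σ z):ℕ) < ((σ (σ z)):ℕ) := by rw [hσinv z hzmax.1]; exact hzmax.2
          rcases Nat.lt_trichotomy ((σ z):ℕ) (i:ℕ) with h2|h2|h2
          · exact h2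
          · exfalso
            have : σ z = i := Fin.ext h2
            rw [← this, hσinv z hzmax.1] at hz'
            omega
          · exfalso
            have hne2 : σ z ≠ σ i := by
              intro h
              have h' := congrArg σ h
              rw [hσinv z hzmax.1, hσinv i hi1] at h'
              rw [h'] at hz'
              omega
            have := hnest i (σ z) hi1 hi2 hzsne hzs2 hne2 h2
            rw [hσinv z hzmax.1] at this
            omega
        refine ⟨σ z, ?_, hσinv z hzmax.1⟩
        rw [Finset.mem_Iio]
        exact hszi
    rw [Fin.card_Iio, Fin.card_Ioi] at hcard
    have h1 := (σ i).isLt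
    have h2 := i.isLt
    omega
  set bm : ℕ := M.card with hbmdef
  have hM_iff : ∀ x : Fin n, x ∈ M ↔ (x:ℕ) < bm := initseg hMdc
  have hbm_le : 2 * bm ≤ n := by
    have hinj : Set.InjOn σ M := by
      intro x hx y hy hee
      rw [Finset.mem_coe, hMmem] at hx hy
      rw [← hσinv x hx.1, hee, hσinv y hy.1]
    have himg : (M.image σ).card = bm := Finset.card_image_of_injOn hinj
    have hdisj : Disjoint M (M.image σ) := by
      rw [Finset.disjoint_left]
      intro a ha hb
      rw [hMmem] at ha
      rw [Finset.mem_image] at hb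
      obtain ⟨x, hx, hxa⟩ := hb
      rw [hMmem] at hx
      have : σ a = x := by rw [← hxa, hσinv x hx.1]
      have hv := congrArg Fin.val hxa
      have hv2 := congrArg Fin.val this
      omega
    have hcu := Finset.card_le_univ (M ∪ M.image σ)
    rw [Finset.card_union_of_disjoint hdisj, himg] at hcu
    simp only [Finset.card_univ, Fintype.card_fin] at hcu
    omega
  have hmax_iff : ∀ x : Fin n, (σ x ≠ x ∧ ((σ x):ℕ) < (x:ℕ)) ↔ (n - bm ≤ (x:ℕ)) := by
    intro x
    constructor
    · rintro ⟨h1, h2⟩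
      have hmem : σ x ∈ M := by
        rw [hMmem, hσinv x h1]
        exact ⟨Ne.symm h1, h2⟩
      have hF := hF4 (σ x) hmem
      rw [hσinv x h1] at hF
      have hb := (hM_iff (σ x)).mp hmem
      omega
    · intro hx
      by_cases h1 : σ x = x
      · exfalso
        have hbm1 : 1 ≤ bm := by
          by_contra h
          have := x.isLt
          omega
        have hrmem : (⟨bm - 1, by have := x.isLt; omega⟩ : Fin n) ∈ M :=
          (hM_iff _).mpr (by simp; omega)
        set r : Fin n := ⟨bm - 1, by have := x.isLt; omega⟩ with hrdef
        have hrM := (hMmem r).mp hrmem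
        have hF := hF4 r hrmem
        rcases eq_or_lt_of_le (show ((σ r):ℕ) ≤ (x:ℕ) from by
          have : (r:ℕ) = bm - 1 := rfl
          omega) with h|h
        · have hex : σ r = x := Fin.ext h
          rw [← hex, hσinv r hrM.1] at h1
          have := congrArg Fin.val h1
          omega
        · exact hfree_ne x h1 (hDhigh r hrM.1 hrM.2 x h)
      · rcases Nat.lt_trichotomy ((σ x):ℕ) (x:ℕ) with h2|h2|h2
        · exact ⟨h1, h2⟩
        · exact absurd (Fin.ext h2) h1
        · exfalso
          have hmem : x ∈ M := (hMmem x).mpr ⟨h1, h2⟩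
          have := (hM_iff x).mp hmem
          omega
  have hfree_iff : ∀ x : Fin n, σ x = x ↔ (bm ≤ (x:ℕ) ∧ (x:ℕ) < n - bm) := by
    intro x
    constructor
    · intro h
      constructor
      · by_contra hc
        push_neg at hc
        have := (hMmem x).mp ((hM_iff x).mpr hc)
        exact this.1 h
      · by_contra hc
        push_neg at hc
        exact ((hmax_iff x).mpr hc).1 h
    · rintro ⟨h1, h2⟩
      by_contra hc
      rcases Nat.lt_trichotomy ((σ x):ℕ) (x:ℕ) with h3|h3|h3
      · have := (hmax_iff x).mp ⟨hc, h3⟩; omega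
      · exact hc (Fin.ext h3)
      · have := (hM_iff x).mp ((hMmem x).mpr ⟨hc, h3⟩); omega
  have hminD : ∀ x : Fin n, x ∈ M → ∀ x' : Fin n, x' ∈ M → A x x = A x' x' := by
    intro x hx x' hx'
    rw [hMmem] at hx hx'
    rcases Nat.lt_trichotomy (x:ℕ) (x':ℕ) with h|h|h
    · exact hDlow x' hx'.1 hx'.2 x h
    · rw [show x = x' from Fin.ext h]
    · exact (hDlow x hx.1 hx.2 x' h).symm
  by_cases hbm0 : bm = 0
  · -- no pairs at all
    have hallfree : ∀ x : Fin n, σ x = x := by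
      intro x
      rw [hfree_iff]
      have := x.isLt
      omega
    have h0n : 0 < n := hn
    refine ⟨0, n+1, A ⟨0,h0n⟩ ⟨0,h0n⟩, 1, fun _ => 0, by omega, by omega,
      hfree_ne ⟨0,h0n⟩ (hallfree ⟨0,h0n⟩), one_ne_zero, ?_, ?_, ?_⟩
    · intro i
      rw [if_neg (by omega), if_pos (by have := i.isLt; omega)]
      have h0v : ((⟨0,h0n⟩ : Fin n):ℕ) = 0 := rfl
      rcases Nat.lt_trichotomy ((⟨0,h0n⟩ : Fin n):ℕ) (i:ℕ) with h|h|h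
      · exact (hfree_eq ⟨0,h0n⟩ i (hallfree _) (hallfree i) h).symm
      · rw [show (⟨0,h0n⟩ : Fin n) = i from Fin.ext h]
      · exact absurd h (by omega)
    · intro i j hji
      rw [if_neg]
      · exact hcolzero i j hji (by rw [hallfree i]; exact hji)
      · rintro ⟨hc, -⟩
        rcases hc with hc|hc
        · omega
        · have := i.isLt; omega
    · intro k hk
      rcases hk with ⟨h1,h2⟩|⟨h1,h2⟩ <;> omega
  · have hbm1 : 1 ≤ bm := by omega
    have h0n : 0 < n := hn
    set r0 : Fin n := ⟨0, h0n⟩ with hr0def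
    have hr0v : (r0:ℕ) = 0 := rfl
    have hr0M : r0 ∈ M := (hM_iff r0).mpr (by omega)
    have hr0p := (hMmem r0).mp hr0M
    have hYne : A r0 (σ r0) * A (σ r0) r0 ≠ 0 :=
      mul_ne_zero (hσoff r0 hr0p.1) (hσoff' r0 hr0p.1)
    have hF0 := hF4 r0 hr0M
    have hYall : ∀ x : Fin n, x ∈ M →
        A x (σ x) * A (σ x) x = A r0 (σ r0) * A (σ r0) r0 := by
      intro x hx
      have hxp := (hMmem x).mp hx
      rcases Nat.lt_trichotomy (r0:ℕ) (x:ℕ) with h|h|h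
      · exact (hYY r0 x hr0p.1 hr0p.2 hxp.1 hxp.2 h).symm
      · rw [show x = r0 from Fin.ext h.symm]
      · exact absurd h (by omega)
    have hDall : ∀ x : Fin n, x ∈ M → A x x = A r0 r0 :=
      fun x hx => hminD x hx r0 hr0M
    have key : ∃ lam mu : ℂ, lam + mu = A r0 r0 ∧
        lam * mu = -(A r0 (σ r0) * A (σ r0) r0) ∧
        (∀ x : Fin n, σ x = x → A x x = lam) := by
      by_cases hf : 2*bm < n
      · set x0 : Fin n := ⟨bm, by omega⟩ with hx0def
        have hx0v : (x0:ℕ) = bm := rfl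
        have hx0free : σ x0 = x0 := (hfree_iff x0).mpr (by omega)
        refine ⟨A x0 x0, A r0 r0 - A x0 x0, by ring, ?_, ?_⟩
        · have hYf := hYfree r0 x0 hr0p.1 hr0p.2 hx0free (by omega) (by omega)
          linear_combination hYf
        · intro x hx
          rcases Nat.lt_trichotomy (x:ℕ) ((x0:ℕ)) with h|h|h
          · exact hfree_eq x x0 hx hx0free h
          · rw [show x = x0 from Fin.ext h]
          · exact (hfree_eq x0 x hx0free hx h).symm
      · have hf2 : 2*bm = n := by omega
        obtain ⟨s, hs⟩ := IsAlgClosed.exists_pow_nat_eq (k := ℂ)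
          (A r0 r0 ^ 2 + 4 * (A r0 (σ r0) * A (σ r0) r0)) (by norm_num : 0 < 2)
        refine ⟨(A r0 r0 + s)/2, (A r0 r0 - s)/2, by ring,
          by linear_combination (-1/4 : ℂ) * hs, ?_⟩
        intro x hx
        have := (hfree_iff x).mp hx
        omega
    obtain ⟨lam, mu, hsum, hprod, hfreelam⟩ := key
    have hlamne : lam ≠ 0 := by
      intro h
      rw [h, zero_mul] at hprod
      exact hYne (by linear_combination hprod)
    have hmune : mu ≠ 0 := by
      intro h
      rw [h, mul_zero] at hprod
      exact hYne (by linear_combination hprod)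
    refine ⟨bm, n + 1 - bm, lam, mu,
      fun k => if h : 1 ≤ k ∧ k ≤ n then A ⟨n - k, by omega⟩ ⟨k - 1, by omega⟩ else 0,
      by omega, by omega, hlamne, hmune, ?_, ?_, ?_⟩
    · intro i
      by_cases h1 : (i:ℕ) + 1 ≤ bm
      · rw [if_pos h1]
        have hiM : i ∈ M := (hM_iff i).mpr (by omega)
        rw [hDall i hiM]
        exact hsum.symm
      · rw [if_neg h1]
        by_cases h2 : (i:ℕ) + 1 < n + 1 - bm
        · rw [if_pos h2]
          exact hfreelam i ((hfree_iff i).mpr (by omega))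
        · rw [if_neg h2]
          have hmx := (hmax_iff i).mpr (by have := i.isLt; omega)
          exact hDmax2' i hmx.1 hmx.2
    · intro i j hji
      by_cases hC : (((i:ℕ)+1 ≤ bm ∨ n+1-bm ≤ (i:ℕ)+1) ∧ (j:ℕ)+(i:ℕ)+1 = n)
      · rw [if_pos hC]
        obtain ⟨-, hji2⟩ := hC
        have hcond : 1 ≤ (i:ℕ)+1 ∧ (i:ℕ)+1 ≤ n := ⟨by omega, by have := i.isLt; omega⟩
        simp only []
        rw [dif_pos hcond]
        have hij := i.isLt
        congr 1 <;> exact Fin.ext (by simp; omega)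
      · rw [if_neg hC]
        by_contra hAji
        have hσi : σ i = j := hσcol i j hji hAji
        have hσine : σ i ≠ i := by rw [hσi]; exact hji
        rcases Nat.lt_trichotomy (i:ℕ) ((σ i):ℕ) with h|h|h
        · have hiM : i ∈ M := (hMmem i).mpr ⟨hσine, h⟩
          have hF := hF4 i hiM
          have hb := (hM_iff i).mp hiM
          rw [hσi] at hF
          exact hC ⟨Or.inl (by omega), by omega⟩
        · exact hσine (Fin.ext h).symm
        · have hmx := (hmax_iff i).mp ⟨hσine, h⟩
          have hsM : σ i ∈ M := (hMmem (σ i)).mpr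
            (by rw [hσinv i hσine]; exact ⟨Ne.symm hσine, h⟩)
          have hF := hF4 (σ i) hsM
          rw [hσinv i hσine, hσi] at hF
          exact hC ⟨Or.inr (by omega), by omega⟩
    · intro k hk
      have main : ∀ m : ℕ, 1 ≤ m → m ≤ bm →
          (fun k => if h : 1 ≤ k ∧ k ≤ n then
              A ⟨n - k, by omega⟩ ⟨k - 1, by omega⟩ else 0) m *
          (fun k => if h : 1 ≤ k ∧ k ≤ n then
              A ⟨n - k, by omega⟩ ⟨k - 1, by omega⟩ else 0) (n + 1 - m)
            = -(lam*mu) := by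
        intro m h1 h2
        have hmn : m ≤ n := by omega
        have hcond1 : 1 ≤ m ∧ m ≤ n := ⟨h1, hmn⟩
        have hcond2 : 1 ≤ n+1-m ∧ n+1-m ≤ n := ⟨by omega, by omega⟩
        simp only []
        rw [dif_pos hcond1, dif_pos hcond2]
        set rm : Fin n := ⟨m-1, by omega⟩ with hrmdef
        have hrmv : (rm:ℕ) = m - 1 := rfl
        have hrmM : rm ∈ M := (hM_iff rm).mpr (by omega)
        have hFrm := hF4 rm hrmM
        have htarget : A (σ rm) rm * A rm (σ rm) = -(lam*mu) := by
          have hy := hYall rm hrmM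
          linear_combination hy + hprod
        convert htarget using 3 <;> exact Fin.ext (by simp; omega)
      rcases hk with ⟨h1,h2⟩|⟨h1,h2⟩
      · exact main k h1 h2
      · have hm1 : 1 ≤ n+1-k := by omega
        have hm2 : n+1-k ≤ bm := by omega
        have hmm := main (n+1-k) hm1 hm2
        rw [show n+1-(n+1-k) = k from by omega] at hmm
        rw [mul_comm] at hmm
        exact hmm
end
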